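/- arXiv:math/0404319 — 9 statements merged into one kernel-verified Lean document; each statement's English description precedes it below -/
import Mathlib

section
/- For every countable simple graph G, the following are equivalent: (i) there exists a countable simple graph G' such that G and G' are independent (there is no graph homomorphism G → G' and no graph homomorphism G' → G); (ii) G is not bipartite and G contains no infinite complete subgraph. -/
/-- A graph is `KOmegaFree` if it contains no infinite set of pairwise adjacent
vertices (no infinite complete subgraph). -/
def KOmegaFree {V : Type*} (G : SimpleGraph V) : Prop :=
  ¬ ∃ S : Set V, S.Infinite ∧ S.Pairwise G.Adj

open Set

/-- Infinite Ramsey theorem for increasing `k`-tuples, relativized to an infinite set. -/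
theorem ramsey (k : ℕ) {n : ℕ} (c : (Fin k → ℕ) → Fin n) :
    ∀ B : Set ℕ, B.Infinite →
      ∃ A : Set ℕ, A ⊆ B ∧ A.Infinite ∧ ∃ i0 : Fin n,
        ∀ f : Fin k → ℕ, StrictMono f → (∀ j, f j ∈ A) → c f = i0 := by
  induction k with
  | zero =>
    intro B hB
    refine ⟨B, subset_rfl, hB, c (fun i => i.elim0), fun f _ _ => ?_⟩
    congr 1
    ext i
    exact i.elim0
  | succ k ih =>
    intro B hB
    -- the key one-step lemma
    have step : ∀ A0 : Set ℕ, A0.Infinite →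
        ∃ (x : ℕ) (A : Set ℕ) (i : Fin n), x ∈ A0 ∧ A ⊆ A0 ∧ A.Infinite ∧
          (∀ y ∈ A, x < y) ∧
          (∀ g : Fin k → ℕ, StrictMono g → (∀ j, g j ∈ A) → c (Fin.cons x g) = i) := by
      intro A0 hA0
      obtain ⟨x, hx⟩ := hA0.nonempty
      have hA0' : (A0 \ Iic x).Infinite := hA0.diff (finite_Iic x)
      obtain ⟨A, hsub, hAinf, i, hi⟩ := ih (fun g => c (Fin.cons x g)) (A0 \ Iic x) hA0'
      refine ⟨x, A, i, hx, fun y hy => (hsub hy).1, hAinf, ?_, hi⟩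
      intro y hy
      have := (hsub hy).2
      simpa using this
    -- build the chain by recursion
    classical
    let St := {p : ℕ × Set ℕ × Fin n //
        p.2.1 ⊆ B ∧ p.2.1.Infinite ∧ (∀ y ∈ p.2.1, p.1 < y) ∧
        (∀ g : Fin k → ℕ, StrictMono g → (∀ j, g j ∈ p.2.1) → c (Fin.cons p.1 g) = p.2.2)}
    have next : ∀ (A0 : Set ℕ), A0 ⊆ B → A0.Infinite →
        ∃ s : St, s.1.1 ∈ A0 ∧ s.1.2.1 ⊆ A0 := by
      intro A0 hsub hinf
      obtain ⟨x, A, i, hx, hAsub, hAinf, hlt, hhom⟩ := step A0 hinf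
      exact ⟨⟨(x, A, i), hAsub.trans hsub, hAinf, hlt, hhom⟩, hx, hAsub⟩
    have hBB : B ⊆ B := subset_rfl
    let chain : ℕ → St := fun m => Nat.rec
      (Classical.choose (next B hBB hB))
      (fun _ prev => Classical.choose (next prev.1.2.1 prev.2.1 prev.2.2.1)) m
    let x : ℕ → ℕ := fun m => (chain m).1.1
    let A : ℕ → Set ℕ := fun m => (chain m).1.2.1
    let col : ℕ → Fin n := fun m => (chain m).1.2.2
    have hchain : ∀ m, x (m+1) ∈ A m ∧ A (m+1) ⊆ A m := by
      intro m
      exact Classical.choose_spec (next (chain m).1.2.1 (chain m).2.1 (chain m).2.2.1)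
    have hAB : ∀ m, A m ⊆ B := fun m => (chain m).2.1
    have hAinf : ∀ m, (A m).Infinite := fun m => (chain m).2.2.1
    have hlt : ∀ m, ∀ y ∈ A m, x m < y := fun m => (chain m).2.2.2.1
    have hhom : ∀ m, ∀ g : Fin k → ℕ, StrictMono g → (∀ j, g j ∈ A m) →
        c (Fin.cons (x m) g) = col m := fun m => (chain m).2.2.2.2
    have hAmono : ∀ s t, s ≤ t → A t ⊆ A s := by
      intro s t hst
      induction t with
      | zero => cases Nat.le_zero.mp hst; exact subset_rfl
      | succ t iht =>
        rcases Nat.lt_or_ge s (t+1) with h | h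
        · exact ((hchain t).2).trans (iht (Nat.lt_succ_iff.mp h))
        · have : s = t+1 := le_antisymm hst h
          subst this; exact subset_rfl
    have hxA : ∀ s t, s < t → x t ∈ A s := by
      intro s t hst
      have h1 : x t ∈ A (t-1) := by
        obtain ⟨u, rfl⟩ := Nat.exists_eq_add_of_lt hst
        have := (hchain (s+u)).1
        simpa using this
      exact hAmono s (t-1) (by omega) h1
    have hxmono : StrictMono x := strictMono_nat_of_lt_succ (by
      intro m
      exact hlt m (x (m+1)) ((hchain m).1))
    -- pigeonhole on colors
    obtain ⟨i0, hfib⟩ := Finite.exists_infinite_fiber col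
    have hfib' : {m | col m = i0}.Infinite := by
      rw [← Set.infinite_coe_iff]
      exact hfib
    refine ⟨x '' {m | col m = i0}, ?_, hfib'.image (hxmono.injective.injOn), i0, ?_⟩
    · rintro y ⟨m, _, rfl⟩
      rcases Nat.eq_zero_or_pos m with rfl | hm
      · exact (Classical.choose_spec (next B hBB hB)).1
      · exact hAB (m-1) (hxA (m-1) m (by omega))
    · intro f hf hfA
      -- write each f j as x (m j)
      have hm : ∀ j, ∃ mj, col mj = i0 ∧ x mj = f j := by
        intro j
        obtain ⟨mj, hmj, hx⟩ := hfA j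
        exact ⟨mj, hmj, hx⟩
      choose m hcol hxm using hm
      have hmmono : StrictMono m := by
        intro a b hab
        have : x (m a) < x (m b) := by rw [hxm a, hxm b]; exact hf hab
        exact hxmono.lt_iff_lt.mp this
      have htail : ∀ j : Fin k, f j.succ ∈ A (m 0) := by
        intro j
        rw [← hxm j.succ]
        exact hxA (m 0) (m j.succ) (hmmono (Fin.succ_pos j))
      have := hhom (m 0) (Fin.tail f) (fun a b hab => hf (Fin.succ_lt_succ_iff.mpr hab)) htail
      calc c f = c (Fin.cons (f 0) (Fin.tail f)) := by rw [Fin.cons_self_tail]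
        _ = c (Fin.cons (x (m 0)) (Fin.tail f)) := by rw [hxm 0]
        _ = col (m 0) := this
        _ = i0 := hcol 0

open Finset

/-- Vertices of the `r`-th shift graph: strictly increasing `(r+1)`-tuples of naturals. -/
def SGV (r : ℕ) : Type := {f : Fin (r+1) → ℕ // StrictMono f}

instance (r : ℕ) : Countable (SGV r) := by unfold SGV; infer_instance

/-- `g` is the (forward) shift of `f`. -/
def SShift {r : ℕ} (f g : SGV r) : Prop :=
  (∀ i : Fin r, g.1 i.castSucc = f.1 i.succ) ∧ f.1 (Fin.last r) < g.1 (Fin.last r)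

/-- The shift graph. -/
def SG (r : ℕ) : SimpleGraph (SGV r) where
  Adj f g := SShift f g ∨ SShift g f
  symm := ⟨by intro f g h; tauto⟩
  loopless := ⟨by rintro f (⟨-, h⟩ | ⟨-, h⟩) <;> exact lt_irrefl _ h⟩

def SGpi {r : ℕ} (X : SGV (r+1)) : SGV r :=
  ⟨fun i => X.1 i.castSucc, fun a b h => X.2 (Fin.castSucc_lt_castSucc_iff.mpr h)⟩

def SGrho {r : ℕ} (X : SGV (r+1)) : SGV r :=
  ⟨fun i => X.1 i.succ, fun a b h => X.2 (Fin.succ_lt_succ_iff.mpr h)⟩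

lemma sshift_pi_rho {r : ℕ} (X : SGV (r+1)) : SShift (SGpi X) (SGrho X) := by
  constructor
  · intro i
    show X.1 (i.castSucc).succ = X.1 (i.succ).castSucc
    rw [Fin.succ_castSucc]
  · exact X.2 Fin.castSucc_lt_succ

lemma pi_eq_rho_of_sshift {r : ℕ} {f g : SGV (r+1)} (h : SShift f g) : SGpi g = SGrho f := by
  apply Subtype.ext
  funext i
  exact h.1 i

lemma sshift_fst_lt {r : ℕ} {f g : SGV (r+1)} (h : SShift f g) : f.1 0 < g.1 0 := by
  have h0 : g.1 (Fin.castSucc 0) = f.1 (Fin.succ 0) := h.1 0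
  have : f.1 0 < f.1 (Fin.succ 0) := f.2 (Fin.succ_pos 0)
  rw [← h0] at this
  simpa using this

section cyclic

variable {V : Type*} (G : SimpleGraph V)

/-- From a closed walk, a cyclic walk indexed by `ZMod`. -/
lemma cyclic_of_closed_walk {v : V} (p : G.Walk v v) (hk : 0 < p.length) :
    ∃ w : ZMod p.length → V, ∀ i, G.Adj (w i) (w (i + 1)) := by
  haveI : NeZero p.length := ⟨hk.ne'⟩
  refine ⟨fun i => p.getVert i.val, fun i => ?_⟩
  have hiv : i.val < p.length := i.val_lt
  have hval : (i + 1).val = (i.val + 1) % p.length := by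
    rw [ZMod.val_add, ZMod.val_one_eq_one_mod]
    conv_rhs => rw [Nat.add_mod]
    rw [Nat.mod_eq_of_lt hiv]
  show G.Adj (p.getVert i.val) (p.getVert (i + 1).val)
  rcases Nat.lt_or_ge (i.val + 1) p.length with h | h
  · rw [hval, Nat.mod_eq_of_lt h]
    exact p.adj_getVert_succ hiv
  · have hL : i.val + 1 = p.length := by omega
    have h0 : (i + 1).val = 0 := by rw [hval, hL, Nat.mod_self]
    rw [h0, SimpleGraph.Walk.getVert_zero]
    have := p.adj_getVert_succ hiv
    rw [hL, SimpleGraph.Walk.getVert_length] at this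
    exact this

/-- Contract a cyclic walk with possibly-stationary steps into a genuine closed walk whose
length is the number of moving steps. -/
lemma contract_cyclic {L : ℕ} (hL : 0 < L) (b : ZMod L → V) (P : ℕ → Prop)
    [DecidablePred P]
    (hadj : ∀ n : ℕ, n < L → P n → G.Adj (b n) (b (n + 1)))
    (heq : ∀ n : ℕ, n < L → ¬ P n → b n = b ((n : ZMod L) + 1)) :
    ∃ p : G.Walk (b 0) (b 0), p.length = ((range L).filter P).card := by
  haveI : NeZero L := ⟨hL.ne'⟩
  have key : ∀ n : ℕ, n ≤ L → ∃ p : G.Walk (b 0) (b (n : ZMod L)),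
      p.length = ((range n).filter P).card := by
    intro n
    induction n with
    | zero =>
      intro _
      exact ⟨(SimpleGraph.Walk.nil).copy rfl (congrArg b (by norm_num)), by simp⟩
    | succ n ihn =>
      intro hn1
      have hn : n < L := hn1
      obtain ⟨p, hp⟩ := ihn (le_of_lt hn)
      have hcast : ((n+1 : ℕ) : ZMod L) = (n : ZMod L) + 1 := by push_cast; ring
      by_cases hPn : P n
      · refine ⟨(p.concat (hadj n hn hPn)).copy rfl (congrArg b hcast.symm), ?_⟩
        rw [SimpleGraph.Walk.length_copy, SimpleGraph.Walk.length_concat, hp,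
          Finset.range_add_one, Finset.filter_insert, if_pos hPn,
          Finset.card_insert_of_notMem (by simp)]
      · refine ⟨p.copy rfl ((heq n hn hPn).trans (congrArg b hcast.symm)), ?_⟩
        rw [SimpleGraph.Walk.length_copy, hp, Finset.range_add_one, Finset.filter_insert,
          if_neg hPn]
  obtain ⟨p, hp⟩ := key L le_rfl
  refine ⟨p.copy rfl (congrArg b (ZMod.natCast_self L)), ?_⟩
  rw [SimpleGraph.Walk.length_copy, hp]

end cyclic

section parity

open Finset

lemma sum_range_zmod {L : ℕ} [NeZero L] (F : ZMod L → ZMod 2) :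
    ∑ n ∈ range L, F (n : ZMod L) = ∑ z : ZMod L, F z := by
  exact Finset.sum_nbij' (i := fun n : ℕ => (n : ZMod L)) (j := fun z => z.val)
    (fun a _ => Finset.mem_univ _)
    (fun z _ => Finset.mem_range.mpr z.val_lt)
    (fun a ha => ZMod.val_cast_of_lt (Finset.mem_range.mp ha))
    (fun z _ => ZMod.natCast_rightInverse z)
    (fun a _ => rfl)

lemma even_changes {L : ℕ} (hL : 0 < L) (e : ZMod L → ZMod 2) :
    Even (((range L).filter (fun n : ℕ => ¬ (e (n : ZMod L) = e ((n : ZMod L) + 1)))).card) := by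
  classical
  haveI : NeZero L := ⟨hL.ne'⟩
  set c := ((range L).filter (fun n : ℕ => ¬ (e (n : ZMod L) = e ((n : ZMod L) + 1)))).card with hc
  have hcast : (c : ZMod 2) = ∑ n ∈ range L, (e (n : ZMod L) + e ((n : ZMod L) + 1)) := by
    rw [hc, Finset.card_filter, Nat.cast_sum]
    apply Finset.sum_congr rfl
    intro n _
    have : ∀ x y : ZMod 2, ((if ¬ (x = y) then 1 else 0 : ℕ) : ZMod 2) = x + y := by decide
    exact this _ _
  have hsplit : ∑ n ∈ range L, (e (n : ZMod L) + e ((n : ZMod L) + 1))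
      = (∑ z : ZMod L, e z) + ∑ z : ZMod L, e (z + 1) := by
    rw [Finset.sum_add_distrib, sum_range_zmod (fun z => e z),
      sum_range_zmod (fun z => e (z + 1))]
  have hshift : ∑ z : ZMod L, e (z + 1) = ∑ z : ZMod L, e z :=
    Fintype.sum_equiv (Equiv.addRight (1 : ZMod L)) _ _ (fun z => rfl)
  have hzero : (c : ZMod 2) = 0 := by
    rw [hcast, hsplit, hshift]
    have : ∀ x : ZMod 2, x + x = 0 := by decide
    exact this _
  obtain ⟨t, ht⟩ := (ZMod.natCast_eq_zero_iff c 2).mp hzero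
  exact ⟨t, by omega⟩

end parity

lemma odd_cyclic_ge_three {V : Type*} (G : SimpleGraph V) {L : ℕ} (hodd : Odd L)
    (w : ZMod L → V) (hw : ∀ i, G.Adj (w i) (w (i + 1))) : 3 ≤ L := by
  have h0 : L ≠ 0 := by rintro rfl; simp at hodd
  have h1 : L ≠ 1 := by
    rintro rfl
    have h := hw 0
    have : ((0 : ZMod 1) + 1) = 0 := Subsingleton.elim _ _
    rw [this] at h
    exact G.irrefl h
  have := Nat.odd_iff.mp hodd
  omega

/-- Shift graphs have no short odd closed (cyclic) walks: odd girth of `SG r` is `2r+3`. -/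
theorem sg_long_odd (r : ℕ) : ∀ (L : ℕ), Odd L → ∀ w : ZMod L → SGV r,
    (∀ i, (SG r).Adj (w i) (w (i + 1))) → 2 * r + 3 ≤ L := by
  induction r with
  | zero =>
    intro L hodd w hw
    simpa using odd_cyclic_ge_three (SG 0) hodd w hw
  | succ r ih =>
    intro L hodd w hw
    classical
    have h3 : 3 ≤ L := odd_cyclic_ge_three _ hodd w hw
    have hL : 0 < L := by omega
    haveI : NeZero L := ⟨hL.ne'⟩
    set ε : ZMod L → Prop := fun i => SShift (w i) (w (i + 1)) with hεdef
    set e : ZMod L → ZMod 2 := fun i => if ε i then 1 else 0 with hedef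
    set b : ZMod L → SGV r := fun i => if ε i then SGrho (w i) else SGpi (w i) with hbdef
    have hback : ∀ i, ¬ ε i → SShift (w (i + 1)) (w i) := fun i h => (hw i).resolve_left h
    have key1 : ∀ i, e i = e (i + 1) → (SG r).Adj (b i) (b (i + 1)) := by
      intro i he
      by_cases h1 : ε i <;> by_cases h2 : ε (i + 1)
      · have hpr := pi_eq_rho_of_sshift h1
        simp only [hbdef, if_pos h1, if_pos h2]
        rw [← hpr]
        exact Or.inl (sshift_pi_rho _)
      · exfalso; simp [hedef, if_pos h1, if_neg h2] at he
      · exfalso; simp [hedef, if_neg h1, if_pos h2] at he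
      · have hpr := pi_eq_rho_of_sshift (hback i h1)
        simp only [hbdef, if_neg h1, if_neg h2]
        rw [hpr]
        exact ((Or.inl (sshift_pi_rho (w (i+1)))) : (SG r).Adj _ _).symm
    have key2 : ∀ i, ¬ (e i = e (i + 1)) → b i = b (i + 1) := by
      intro i he
      by_cases h1 : ε i <;> by_cases h2 : ε (i + 1)
      · exfalso; exact he (by simp [hedef, if_pos h1, if_pos h2])
      · simp only [hbdef, if_pos h1, if_neg h2]
        exact (pi_eq_rho_of_sshift h1).symm
      · simp only [hbdef, if_neg h1, if_pos h2]
        exact pi_eq_rho_of_sshift (hback i h1)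
      · exfalso; exact he (by simp [hedef, if_neg h1, if_neg h2])
    set P : ℕ → Prop := fun n => e (n : ZMod L) = e ((n : ZMod L) + 1) with hPdef
    have hceven : Even (((range L).filter (fun n => ¬ P n)).card) := even_changes hL e
    have hsum : ((range L).filter P).card + ((range L).filter (fun n => ¬ P n)).card = L := by
      rw [Finset.card_filter_add_card_filter_not, Finset.card_range]
    -- the number of changes is nonzero
    have hcne : ((range L).filter (fun n => ¬ P n)).card ≠ 0 := by
      intro hc0
      have hall : ∀ i : ZMod L, e i = e (i + 1) := by
        intro i
        have hmem : i.val ∈ range L := Finset.mem_range.mpr i.val_lt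
        have : ¬ ¬ P i.val := by
          intro hni
          have : i.val ∈ (range L).filter (fun n => ¬ P n) := Finset.mem_filter.mpr ⟨hmem, hni⟩
          rw [Finset.card_eq_zero.mp hc0] at this
          simp at this
        have hP : P i.val := not_not.mp this
        rw [hPdef] at hP
        rwa [ZMod.natCast_rightInverse i] at hP
      have hiff : ∀ i : ZMod L, ε i ↔ ε (i + 1) := by
        intro i
        have := hall i
        by_cases h1 : ε i <;> by_cases h2 : ε (i + 1)
        · tauto
        · exfalso; simp [hedef, if_pos h1, if_neg h2] at this
        · exfalso; simp [hedef, if_neg h1, if_pos h2] at this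
        · tauto
      have hconst : ∀ n : ℕ, ε (n : ZMod L) ↔ ε 0 := by
        intro n
        induction n with
        | zero => simp
        | succ n ihn =>
          have : ((n + 1 : ℕ) : ZMod L) = (n : ZMod L) + 1 := by push_cast; ring
          rw [this, ← hiff]
          exact ihn
      have hconst' : ∀ i : ZMod L, ε i ↔ ε 0 := by
        intro i
        rw [← ZMod.natCast_rightInverse i]
        exact hconst i.val
      set M : ℕ → ℕ := fun n => (w (n : ZMod L)).1 0 with hMdef
      have hcastsucc : ∀ n : ℕ, ((n + 1 : ℕ) : ZMod L) = (n : ZMod L) + 1 := by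
        intro n; push_cast; ring
      by_cases h0 : ε 0
      · have hmono : StrictMono M := strictMono_nat_of_lt_succ (by
          intro n
          have hε : ε (n : ZMod L) := (hconst n).mpr h0
          have := sshift_fst_lt hε
          simp only [hMdef]
          rw [hcastsucc n]
          exact this)
        have := hmono (show 0 < L from hL)
        rw [hMdef] at this
        simp only [Nat.cast_zero, ZMod.natCast_self] at this
        exact lt_irrefl _ this
      · have hanti : StrictAnti M := strictAnti_nat_of_succ_lt (by
          intro n
          have hε : ¬ ε (n : ZMod L) := fun h => h0 ((hconst n).mp h)
          have := sshift_fst_lt (hback _ hε)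
          simp only [hMdef]
          rw [hcastsucc n]
          exact this)
        have := hanti (show 0 < L from hL)
        rw [hMdef] at this
        simp only [Nat.cast_zero, ZMod.natCast_self] at this
        exact lt_irrefl _ this
    have hc2 : 2 ≤ ((range L).filter (fun n => ¬ P n)).card := by
      rcases hceven with ⟨t, ht⟩
      omega
    -- contract to a closed walk in SG r
    obtain ⟨p, hp⟩ := contract_cyclic (SG r) hL b P
      (fun n _ hPn => key1 _ hPn) (fun n _ hPn => key2 _ hPn)
    have hkodd : Odd p.length := by
      rw [hp]
      rcases hceven with ⟨t, ht⟩
      rcases hodd with ⟨s, hs⟩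
      refine Nat.odd_iff.mpr ?_
      omega
    have hk0 : 0 < p.length := by
      rcases hkodd with ⟨t, ht⟩; omega
    obtain ⟨w', hw'⟩ := cyclic_of_closed_walk (SG r) p hk0
    have := ih p.length hkodd w' hw'
    omega

/-! ### Cliques, rank, and the tree graph -/

section cliques

variable {V : Type} (G : SimpleGraph V)

/-- The type of finite cliques of `G`. -/
def Cl : Type := {s : Finset V // G.IsClique (s : Set V)}

instance [Countable V] : Countable (Cl G) := by unfold Cl; infer_instance

/-- The (reverse strict inclusion) relation on cliques. -/
def clRel (D C : Cl G) : Prop := C.1 ⊂ D.1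

instance : IsTrans (Cl G) (clRel G) := ⟨fun _ _ _ h1 h2 => h2.trans h1⟩
instance : IsIrrefl (Cl G) (clRel G) := ⟨fun _ h => ssubset_irrefl _ h⟩
instance : IsStrictOrder (Cl G) (clRel G) := {}

lemma clRel_wf (hK : KOmegaFree G) : WellFounded (clRel G) := by
  rw [RelEmbedding.wellFounded_iff_isEmpty]
  constructor
  intro f
  -- `f` gives a strictly increasing sequence of cliques
  have hmono : ∀ n : ℕ, (f n).1 ⊂ (f (n+1)).1 := by
    intro n
    exact f.map_rel_iff.mpr (Nat.lt_succ_self n)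
  have hsub : ∀ m n : ℕ, m ≤ n → (f m).1 ⊆ (f n).1 := by
    intro m n hmn
    induction n with
    | zero => cases Nat.le_zero.mp hmn; exact subset_rfl
    | succ n ihn =>
      rcases Nat.lt_or_ge m (n+1) with h | h
      · exact Finset.Subset.trans (ihn (Nat.lt_succ_iff.mp h)) (hmono n).subset
      · have : m = n+1 := le_antisymm hmn h
        subst this; exact subset_rfl
  have hcard : ∀ n : ℕ, n ≤ (f n).1.card := by
    intro n
    induction n with
    | zero => omega
    | succ n ihn =>
      have := Finset.card_lt_card (hmono n)
      omega
  apply hK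
  refine ⟨⋃ n, ((f n).1 : Set V), ?_, ?_⟩
  · intro hfin
    obtain ⟨t, ht⟩ := hfin.exists_finset_coe
    have hsub' : (f (t.card + 1)).1 ⊆ t := by
      intro x hx
      have : (x : V) ∈ ⋃ n, ((f n).1 : Set V) := Set.mem_iUnion.mpr ⟨t.card + 1, hx⟩
      rw [← ht] at this
      exact_mod_cast this
    have := Finset.card_le_card hsub'
    have := hcard (t.card + 1)
    omega
  · rintro x ⟨Sx, ⟨nx, rfl⟩, hx⟩ y ⟨Sy, ⟨ny, rfl⟩, hy⟩ hxy
    rcases le_total nx ny with h | h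
    · exact (f ny).2 (hsub _ _ h hx) hy hxy
    · exact (f nx).2 hx (hsub _ _ h hy) hxy

variable {G}
variable (hwf : WellFounded (clRel G))

/-- Rank of a clique. -/
noncomputable def rnk (C : Cl G) : Ordinal := (hwf.apply C).rank

lemma rnk_lt_of_rel {D C : Cl G} (h : clRel G D C) : rnk hwf D < rnk hwf C :=
  Acc.rank_lt_of_rel (hwf.apply C) h

lemma rnk_sup {C : Cl G} {β : Ordinal} (h : β < rnk hwf C) :
    ∃ D : Cl G, clRel G D C ∧ β ≤ rnk hwf D := by
  unfold rnk at h
  rw [Acc.rank_eq] at h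
  obtain ⟨⟨D, hD⟩, hlt⟩ := Ordinal.lt_iSup_iff.mp h
  exact ⟨D, hD, Order.lt_succ_iff.mp hlt⟩

/-- The empty clique. -/
def emptyCl : Cl G := ⟨∅, by simp⟩

/-- Nodes of the tree: lists of cliques with strictly increasing rank (head smallest). -/
def TT : Type := {l : List (Cl G) // l.Chain' (fun a b => rnk hwf a < rnk hwf b)}

instance [Countable V] : Countable (TT hwf) := by unfold TT; infer_instance

/-- The comparability graph of the tree `TT`. -/
def CompT : SimpleGraph (TT hwf) where
  Adj l m := l ≠ m ∧ (l.1 <:+ m.1 ∨ m.1 <:+ l.1)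
  symm := ⟨by rintro l m ⟨h1, h2⟩; exact ⟨h1.symm, h2.symm⟩⟩
  loopless := ⟨by rintro l ⟨h1, -⟩; exact h1 rfl⟩

lemma suffix_comparable {α : Type*} {m1 m2 : List α} :
    ∀ {l : List α}, m1 <:+ l → m2 <:+ l → m1 <:+ m2 ∨ m2 <:+ m1 := by
  have key : ∀ (t1 : List α), m2 <:+ t1 ++ m1 → m1 <:+ m2 ∨ m2 <:+ m1 := by
    intro t1
    induction t1 with
    | nil => exact fun h => Or.inr h
    | cons a t1 ih =>
      intro h
      rw [List.cons_append, List.suffix_cons_iff] at h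
      rcases h with rfl | h
      · exact Or.inl ((List.suffix_append t1 m1).trans (List.suffix_cons a _))
      · exact ih h
  rintro l ⟨t1, rfl⟩ h2
  exact key t1 h2

/-- The ordinal attached to a node: rank of its head (rank of `∅` for `nil`). -/
noncomputable def sigL (l : List (Cl G)) : Ordinal :=
  match l with
  | [] => rnk hwf (emptyCl : Cl G)
  | C :: _ => rnk hwf C

lemma sigL_lt_of_proper_suffix {m m' : List (Cl G)}
    (hch : m'.Chain' (fun a b => rnk hwf a < rnk hwf b))
    (hs : m <:+ m') (hne : m ≠ m') (hm : m ≠ []) : sigL hwf m' < sigL hwf m := by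
  obtain ⟨pre, rfl⟩ := hs
  have hpre : pre ≠ [] := by rintro rfl; simp at hne
  obtain ⟨a, pre', rfl⟩ := List.exists_cons_of_ne_nil hpre
  obtain ⟨b, m'', rfl⟩ := List.exists_cons_of_ne_nil hm
  have hpw : List.Pairwise (fun a b => rnk hwf a < rnk hwf b) ((a :: pre') ++ b :: m'') := by
    haveI : IsTrans (Cl G) (fun a b => rnk hwf a < rnk hwf b) := ⟨fun _ _ _ h1 h2 => h1.trans h2⟩
    exact List.isChain_iff_pairwise.mp hch
  rw [List.pairwise_append] at hpw
  have := hpw.2.2 a (by simp) b (by simp)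
  simpa [sigL] using this
end cliques

/-! ### No homomorphism from `CompT` to `G` -/

section noHomA

variable {V : Type} {G : SimpleGraph V} (hwf : WellFounded (clRel G)) [DecidableEq V]

/-- Head clique of a list (`∅` for nil). -/
def hd (l : List (Cl G)) : Cl G := match l with
  | [] => emptyCl
  | C :: _ => C

lemma sigL_eq_rnk_hd (l : List (Cl G)) : sigL hwf l = rnk hwf (hd l) := by
  cases l <;> rfl

lemma chain'_cons_of_rel {D : Cl G} {l : List (Cl G)}
    (hD : rnk hwf D < rnk hwf (hd l)) (h : l.Chain' (fun a b => rnk hwf a < rnk hwf b)) :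
    (D :: l).Chain' (fun a b => rnk hwf a < rnk hwf b) := by
  cases l with
  | nil => exact List.isChain_singleton D
  | cons C rest =>
    refine h.cons ?_
    intro y hy
    simp at hy
    subst hy
    exact hD

variable (f : (CompT hwf) →g G)

/-- Images under `f` of all the suffixes of a node. -/
noncomputable def FF : (l : List (Cl G)) →
    (h : l.Chain' (fun a b => rnk hwf a < rnk hwf b)) → Finset V
  | [], h => {f ⟨[], h⟩}
  | C :: l, h => insert (f ⟨C :: l, h⟩) (FF l (h.suffix (List.suffix_cons C l)))

lemma FF_mem : ∀ (l : List (Cl G)) (h) (x : V),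
    x ∈ FF hwf f l h ↔ ∃ (m : List (Cl G)) (hm : m <:+ l), x = f ⟨m, h.suffix hm⟩ := by
  intro l
  induction l with
  | nil =>
    intro h x
    simp only [FF, Finset.mem_singleton]
    constructor
    · rintro rfl
      exact ⟨[], List.suffix_rfl, rfl⟩
    · rintro ⟨m, hm, rfl⟩
      have : m = [] := List.suffix_nil.mp hm
      subst this
      rfl
  | cons C l ih =>
    intro h x
    simp only [FF, Finset.mem_insert]
    constructor
    · rintro (rfl | hx)
      · exact ⟨C :: l, List.suffix_rfl, rfl⟩
      · obtain ⟨m, hm, rfl⟩ := (ih _ x).mp hx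
        exact ⟨m, hm.trans (List.suffix_cons C l), rfl⟩
    · rintro ⟨m, hm, rfl⟩
      rcases List.suffix_cons_iff.mp hm with rfl | hm'
      · exact Or.inl rfl
      · exact Or.inr ((ih _ _).mpr ⟨m, hm', rfl⟩)

lemma FF_clique (l : List (Cl G)) (h) : G.IsClique ((FF hwf f l h : Finset V) : Set V) := by
  intro x hx y hy hxy
  obtain ⟨m, hm, rfl⟩ := (FF_mem hwf f l h x).mp hx
  obtain ⟨m', hm', rfl⟩ := (FF_mem hwf f l h y).mp hy
  have hmm : m ≠ m' := by
    rintro rfl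
    exact hxy rfl
  have hcomp := suffix_comparable hm hm'
  have hadj : (CompT hwf).Adj ⟨m, h.suffix hm⟩ ⟨m', h.suffix hm'⟩ := by
    refine ⟨?_, hcomp⟩
    intro hc
    exact hmm (congrArg Subtype.val hc)
  exact f.map_adj hadj

lemma FF_not_mem (C : Cl G) (l : List (Cl G)) (h) :
    f ⟨C :: l, h⟩ ∉ FF hwf f l (h.suffix (List.suffix_cons C l)) := by
  intro hmem
  obtain ⟨m, hm, heq⟩ := (FF_mem hwf f l _ _).mp hmem
  have hlen : m.length ≤ l.length := hm.length_le
  have hmm : m ≠ C :: l := by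
    intro hc
    rw [hc] at hlen
    simp at hlen
  have hadj : (CompT hwf).Adj ⟨m, (h.suffix (List.suffix_cons C l)).suffix hm⟩ ⟨C :: l, h⟩ := by
    refine ⟨?_, Or.inl (hm.trans (List.suffix_cons C l))⟩
    intro hc
    exact hmm (congrArg Subtype.val hc)
  have := f.map_adj hadj
  rw [← heq] at this
  exact G.irrefl this

lemma FF_card (l : List (Cl G)) (h) : (FF hwf f l h).card = l.length + 1 := by
  induction l with
  | nil => simp [FF]
  | cons C l ih =>
    rw [show FF hwf f (C :: l) h
        = insert (f ⟨C :: l, h⟩) (FF hwf f l (h.suffix (List.suffix_cons C l))) from rfl,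
      Finset.card_insert_of_notMem (FF_not_mem hwf f C l h), ih (h.suffix (List.suffix_cons C l))]
    simp

lemma FF_ssubset (C : Cl G) (l : List (Cl G)) (h) :
    FF hwf f l (h.suffix (List.suffix_cons C l)) ⊂ FF hwf f (C :: l) h :=
  Finset.ssubset_insert (FF_not_mem hwf f C l h)

theorem no_hom_compT : ¬ Nonempty ((CompT hwf) →g G) := by
  rintro ⟨f⟩
  have main : ∀ (o : Ordinal) (l : List (Cl G)) (h), sigL hwf l = o →
      o ≤ rnk hwf (⟨FF hwf f l h, FF_clique hwf f l h⟩ : Cl G) := by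
    intro o
    induction o using Ordinal.induction with
    | h j IH =>
      intro l h hσ
      refine le_of_forall_lt fun β hβ => ?_
      have hβ' : β < rnk hwf (hd l) := by
        rw [← sigL_eq_rnk_hd, hσ]; exact hβ
      obtain ⟨D, hD, hβD⟩ := rnk_sup hwf hβ'
      have hDlt : rnk hwf D < rnk hwf (hd l) := rnk_lt_of_rel hwf hD
      have h' : (D :: l).Chain' (fun a b => rnk hwf a < rnk hwf b) :=
        chain'_cons_of_rel hwf hDlt h
      have hσ' : sigL hwf (D :: l) = rnk hwf D := rfl
      have hlt : rnk hwf D < j := by rw [← hσ, sigL_eq_rnk_hd]; exact hDlt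
      have hIH := IH (rnk hwf D) hlt (D :: l) h' hσ'
      have hss : clRel G
          (⟨FF hwf f (D :: l) h', FF_clique hwf f (D :: l) h'⟩ : Cl G)
          (⟨FF hwf f l h, FF_clique hwf f l h⟩ : Cl G) := by
        have := FF_ssubset hwf f D l h'
        exact this
      calc β ≤ rnk hwf D := hβD
        _ ≤ rnk hwf _ := hIH
        _ < _ := rnk_lt_of_rel hwf hss
  have h0 := main (sigL hwf []) [] List.isChain_nil rfl
  have hrel : clRel G (⟨FF hwf f [] List.isChain_nil, FF_clique hwf f [] List.isChain_nil⟩ : Cl G)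
      (emptyCl : Cl G) := by
    show (emptyCl : Cl G).1 ⊂ FF hwf f [] List.isChain_nil
    show (∅ : Finset V) ⊂ _
    rw [Finset.empty_ssubset]
    exact ⟨f ⟨[], List.isChain_nil⟩, by simp [FF]⟩
  have := rnk_lt_of_rel hwf hrel
  have h0' : sigL hwf [] = rnk hwf (emptyCl : Cl G) := rfl
  rw [h0'] at h0
  exact absurd h0 (not_le.mpr this)

end noHomA

/-! ### No homomorphism from a shift graph to `CompT` -/

lemma exists_strictMono_in {A : Set ℕ} (hA : A.Infinite) :
    ∃ a : ℕ → ℕ, StrictMono a ∧ ∀ n, a n ∈ A := by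
  classical
  have hstep : ∀ x : ℕ, (A \ Set.Iic x).Nonempty := fun x => (hA.diff (Set.finite_Iic x)).nonempty
  let g : ℕ → ℕ := fun x => (hstep x).choose
  have hg : ∀ x, g x ∈ A ∧ x < g x := by
    intro x
    have := (hstep x).choose_spec
    exact ⟨this.1, by simpa using this.2⟩
  let a : ℕ → ℕ := fun n => Nat.rec (hA.nonempty.choose) (fun _ prev => g prev) n
  refine ⟨a, strictMono_nat_of_lt_succ (fun n => (hg (a n)).2), ?_⟩
  intro n
  cases n with
  | zero => exact hA.nonempty.choose_spec
  | succ n => exact (hg (a n)).1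

theorem no_hom_sg_compT {V : Type} {G : SimpleGraph V} (hwf : WellFounded (clRel G)) (r : ℕ) :
    ¬ Nonempty ((SG r) →g (CompT hwf)) := by
  rintro ⟨h⟩
  classical
  set c : (Fin (r + 2) → ℕ) → Fin 2 := fun x =>
    if (∃ v1 v2 : SGV r, v1.1 = x ∘ Fin.castSucc ∧ v2.1 = x ∘ Fin.succ ∧ (h v1).1 <:+ (h v2).1)
      then 0 else 1 with hcdef
  obtain ⟨A, hAsub, hAinf, i0, hhom⟩ := ramsey (r + 2) c Set.univ Set.infinite_univ
  obtain ⟨a, hamono, haA⟩ := exists_strictMono_in hAinf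
  have hvmono : ∀ n : ℕ, StrictMono (fun j : Fin (r+1) => a (n + j.val)) := by
    intro n j1 j2 hj
    exact hamono (by omega)
  set vert : ℕ → SGV r := fun n => ⟨fun j => a (n + j.val), hvmono n⟩ with hvert
  set u : ℕ → TT hwf := fun n => h (vert n) with hu
  have hadj : ∀ n, (SG r).Adj (vert n) (vert (n + 1)) := by
    intro n
    left
    constructor
    · intro i
      show a (n + 1 + (i.castSucc).val) = a (n + (i.succ).val)
      have h1 : (i.castSucc).val = i.val := rfl
      have h2 : (i.succ).val = i.val + 1 := rfl
      rw [h1, h2]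
      exact congrArg a (by omega)
    · show a (n + (Fin.last r).val) < a (n + 1 + (Fin.last r).val)
      exact hamono (by omega)
  have huadj : ∀ n, (CompT hwf).Adj (u n) (u (n + 1)) := fun n => h.map_adj (hadj n)
  have hxmono : ∀ n : ℕ, StrictMono (fun j : Fin (r+2) => a (n + j.val)) := by
    intro n j1 j2 hj
    exact hamono (by omega)
  have hwin : ∀ n : ℕ, (if (u n).1 <:+ (u (n+1)).1 then (0 : Fin 2) else 1) = i0 := by
    intro n
    have hc := hhom (fun j : Fin (r+2) => a (n + j.val)) (hxmono n) (fun j => haA _)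
    rw [hcdef] at hc
    have he1 : ((fun j : Fin (r+2) => a (n + j.val)) ∘ Fin.castSucc) = (vert n).1 := by
      funext j
      rfl
    have he2 : ((fun j : Fin (r+2) => a (n + j.val)) ∘ Fin.succ) = (vert (n+1)).1 := by
      funext j
      show a (n + (j.succ).val) = a (n + 1 + j.val)
      have hjv : (j.succ).val = j.val + 1 := rfl
      rw [hjv]
      exact congrArg a (by omega)
    have hcond : (∃ v1 v2 : SGV r,
        v1.1 = (fun j : Fin (r+2) => a (n + j.val)) ∘ Fin.castSucc ∧
        v2.1 = (fun j : Fin (r+2) => a (n + j.val)) ∘ Fin.succ ∧ (h v1).1 <:+ (h v2).1)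
        ↔ ((u n).1 <:+ (u (n+1)).1) := by
      constructor
      · rintro ⟨v1, v2, h1, h2, hs⟩
        have e1 : v1 = vert n := Subtype.ext (h1.trans he1)
        have e2 : v2 = vert (n+1) := Subtype.ext (h2.trans he2)
        rw [e1, e2] at hs
        exact hs
      · intro hs
        exact ⟨vert n, vert (n+1), he1.symm, he2.symm, hs⟩
    replace hc : (if (∃ v1 v2 : SGV r,
        v1.1 = (fun j : Fin (r+2) => a (n + j.val)) ∘ Fin.castSucc ∧
        v2.1 = (fun j : Fin (r+2) => a (n + j.val)) ∘ Fin.succ ∧ (h v1).1 <:+ (h v2).1)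
        then (0 : Fin 2) else 1) = i0 := hc
    by_cases hs : (u n).1 <:+ (u (n+1)).1
    · rw [if_pos hs]
      rw [if_pos (hcond.mpr hs)] at hc
      exact hc
    · rw [if_neg hs]
      rw [if_neg (fun hx => hs (hcond.mp hx))] at hc
      exact hc
  have hune : ∀ n, (u n).1 ≠ (u (n+1)).1 := by
    intro n hc
    exact (huadj n).1 (Subtype.ext hc)
  fin_cases i0
  · -- all forward suffixes: lengths grow, ranks of heads strictly decrease
    have hsuf : ∀ n, (u n).1 <:+ (u (n+1)).1 := by
      intro n
      by_contra hns
      have := hwin n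
      rw [if_neg hns] at this
      exact absurd this (by decide)
    have hlen : ∀ n, (u n).1.length < (u (n+1)).1.length := by
      intro n
      rcases Nat.lt_or_ge (u n).1.length (u (n+1)).1.length with h' | h'
      · exact h'
      · exfalso
        have hle := (hsuf n).length_le
        have : (u n).1.length = (u (n+1)).1.length := by omega
        exact hune n ((hsuf n).sublist.eq_of_length this)
    have hlen' : ∀ n, n ≤ (u n).1.length := by
      intro n
      induction n with
      | zero => omega
      | succ n ihn => have := hlen n; omega
    set s : ℕ → Ordinal := fun n => sigL hwf (u (n+1)).1 with hs
    have hdec : ∀ n, s (n+1) < s n := by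
      intro n
      apply sigL_lt_of_proper_suffix hwf (u (n+2)).2 (hsuf (n+1)) (hune (n+1))
      have := hlen' (n+1)
      intro hc
      rw [hc] at this
      simp at this
    exact (RelEmbedding.natGT s hdec).not_wellFounded
      (wellFounded_lt : WellFounded ((· < ·) : Ordinal → Ordinal → Prop))
  · -- all backward suffixes: lengths strictly decrease, impossible
    have hsuf : ∀ n, (u (n+1)).1 <:+ (u n).1 := by
      intro n
      rcases (huadj n).2 with h' | h'
      · exfalso
        have := hwin n
        rw [if_pos h'] at this
        exact absurd this (by decide)
      · exact h'
    have hlen : ∀ n, (u (n+1)).1.length < (u n).1.length := by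
      intro n
      have hle := (hsuf n).length_le
      rcases Nat.lt_or_ge ((u (n+1)).1.length) ((u n).1.length) with h' | h'
      · exact h'
      · exfalso
        have : (u (n+1)).1.length = (u n).1.length := by omega
        exact hune n ((hsuf n).sublist.eq_of_length this).symm
    have hbound : ∀ n, (u n).1.length + n ≤ (u 0).1.length := by
      intro n
      induction n with
      | zero => omega
      | succ n ihn => have := hlen n; omega
    have := hbound ((u 0).1.length + 1)
    omega

/-! ### Non-2-colorable graphs have odd closed walks -/

lemma exists_odd_closed_walk {V : Type} {G : SimpleGraph V} (h : ¬ G.Colorable 2) :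
    ∃ (v : V) (p : G.Walk v v), Odd p.length := by
  classical
  by_contra hno
  push_neg at hno
  apply h
  -- representative of each component
  have hreach : ∀ v : V, G.Reachable ((G.connectedComponentMk v).out) v := fun v =>
    SimpleGraph.ConnectedComponent.eq.mp (Quot.out_eq _)
  set p : (v : V) → G.Walk ((G.connectedComponentMk v).out) v := fun v => (hreach v).some with hp
  set col : V → Fin 2 := fun v => if Even (p v).length then 0 else 1 with hcol
  refine ⟨SimpleGraph.Coloring.mk col ?_⟩
  intro u v huv hcuv
  have hcomp : (G.connectedComponentMk u) = (G.connectedComponentMk v) :=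
    SimpleGraph.ConnectedComponent.sound huv.reachable
  have hout : (G.connectedComponentMk u).out = (G.connectedComponentMk v).out := by rw [hcomp]
  -- closed walk at u of odd length
  set q : G.Walk u u :=
    (p u).reverse.append (((p v).copy hout.symm rfl).append (huv.symm.toWalk)) with hq
  have hqlen : q.length = (p u).length + ((p v).length + 1) := by
    rw [hq, SimpleGraph.Walk.length_append, SimpleGraph.Walk.length_reverse,
      SimpleGraph.Walk.length_append, SimpleGraph.Walk.length_copy]
    rfl
  have hparity : Even ((p u).length) ↔ Even ((p v).length) := by
    rw [hcol] at hcuv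
    by_cases h1 : Even ((p u).length) <;> by_cases h2 : Even ((p v).length) <;>
      simp [h1, h2] at hcuv ⊢
  have : Odd q.length := by
    rw [hqlen]
    rcases Nat.even_or_odd ((p u).length) with h1 | h1
    · have h2 := hparity.mp h1
      rcases h1 with ⟨s, hs⟩; rcases h2 with ⟨t, ht⟩
      exact ⟨s + t, by omega⟩
    · have h2 : ¬ Even ((p v).length) := fun hc => (Nat.not_even_iff_odd.mpr h1) (hparity.mpr hc)
      rw [Nat.not_even_iff_odd] at h2
      rcases h1 with ⟨s, hs⟩; rcases h2 with ⟨t, ht⟩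
      exact ⟨s + t + 1, by omega⟩
  exact hno u q this

/-! ### Main theorem -/


/-- **Partnership theorem.** For a countable graph `G`, there exists a countable
graph `G'` independent from `G` (no homomorphism in either direction) iff `G`
is not bipartite and contains no infinite complete subgraph. -/
theorem countable_independent_partner_iff {V : Type} [Countable V] (G : SimpleGraph V) :
    (∃ (W : Type) (_ : Countable W) (G' : SimpleGraph W),
        ¬ Nonempty (G →g G') ∧ ¬ Nonempty (G' →g G)) ↔
    (¬ G.Colorable 2 ∧ KOmegaFree G) := by
  constructor
  · rintro ⟨W, hcW, G', hGG', hG'G⟩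
    haveI := hcW
    constructor
    · intro hcol
      rcases isEmpty_or_nonempty V with hV | hV
      · exact hGG' ⟨⟨fun v => isEmptyElim v, fun {a} {b} _ => isEmptyElim a⟩⟩
      · by_cases hedge : ∃ a b : W, G'.Adj a b
        · obtain ⟨a, b, hab⟩ := hedge
          obtain ⟨c⟩ := hcol
          refine hGG' ⟨⟨fun v => if c v = 0 then a else b, ?_⟩⟩
          intro x y hxy
          have hne := c.valid hxy
          by_cases hx : c x = 0
          · have hy : ¬ c y = 0 := by rw [hx] at hne; exact fun hc => hne hc.symm
            simp only [if_pos hx, if_neg hy]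
            exact hab
          · have hy : c y = 0 := by
              have hx1 : c x = 1 := by omega
              have := hne
              rw [hx1] at this
              omega
            simp only [if_neg hx, if_pos hy]
            exact hab.symm
        · push_neg at hedge
          obtain ⟨v0⟩ := hV
          exact hG'G ⟨⟨fun _ => v0, fun {a} {b} hab => absurd hab (hedge a b)⟩⟩
    · rintro ⟨S, hSinf, hSpair⟩
      obtain ⟨fw, hfw⟩ := (countable_iff_exists_injective W).mp ‹Countable W›
      set j : ℕ ↪ S := hSinf.natEmbedding
      refine hG'G ⟨⟨fun w => (j (fw w) : V), ?_⟩⟩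
      intro a b hab
      have hne : a ≠ b := hab.ne
      have hjne : (j (fw a) : V) ≠ (j (fw b) : V) := by
        intro hc
        exact hne (hfw (j.injective (Subtype.ext hc)))
      exact hSpair (j (fw a)).2 (j (fw b)).2 hjne
  · rintro ⟨hNC, hK⟩
    classical
    have hwf : WellFounded (clRel G) := clRel_wf G hK
    by_cases hhom : Nonempty (G →g CompT hwf)
    · obtain ⟨g⟩ := hhom
      obtain ⟨v, p, hodd⟩ := exists_odd_closed_walk hNC
      refine ⟨SGV p.length, inferInstance, SG p.length, ?_, ?_⟩
      · rintro ⟨f⟩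
        set pm := p.map f with hpm
        have hlen : pm.length = p.length := SimpleGraph.Walk.length_map _ _
        have hpos : 0 < pm.length := by rw [hlen]; exact hodd.pos
        obtain ⟨w, hw⟩ := cyclic_of_closed_walk (SG p.length) pm hpos
        have := sg_long_odd p.length pm.length (by rw [hlen]; exact hodd) w hw
        omega
      · rintro ⟨f⟩
        exact no_hom_sg_compT hwf p.length ⟨g.comp f⟩
    · exact ⟨TT hwf, inferInstance, CompT hwf, hhom, no_hom_compT hwf⟩
end

section
/- There is no hom-universal graph for the class of countable non-bipartite K_ω-free graphs: for every countable K_ω-free simple graph U there exists a countable non-bipartite K_ω-free simple graph G such that there is no graph homomorphism G → U. -/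
namespace NoHomUniv

variable {V : Type} (U : SimpleGraph V)

/-- Vertices of the "clique tree" of `U`: finite lists of pairwise-adjacent vertices. -/
def TreeVert : Type := {l : List V // l.Pairwise U.Adj}

/-- Tree adjacency: one is a proper prefix of the other. -/
def treeAdj (s t : TreeVert U) : Prop := (s.1 <+: t.1 ∨ t.1 <+: s.1) ∧ s ≠ t

/-- Adjacency on `TreeVert U ⊕ Fin 3`: tree adjacency plus a triangle. -/
def bigAdj : TreeVert U ⊕ Fin 3 → TreeVert U ⊕ Fin 3 → Prop
  | Sum.inl s, Sum.inl t => treeAdj U s t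
  | Sum.inr i, Sum.inr j => i ≠ j
  | _, _ => False

def bigGraph : SimpleGraph (TreeVert U ⊕ Fin 3) where
  Adj := bigAdj U
  symm := by
    constructor
    rintro (s | i) (t | j) h <;> simp only [bigAdj] at h ⊢
    · exact ⟨h.1.symm, h.2.symm⟩
    · exact h.symm
  loopless := by
    constructor
    rintro (s | i) h <;> simp only [bigAdj] at h
    · exact h.2 rfl
    · exact h rfl

/-- A prefix of a tree vertex is a tree vertex. -/
def pre (s : TreeVert U) (i : ℕ) : TreeVert U :=
  ⟨s.1.take i, List.Pairwise.sublist (s.1.take_sublist i) s.2⟩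

lemma pre_adj (s : TreeVert U) (i : ℕ) (h : i < s.1.length) :
    treeAdj U (pre U s i) s := by
  refine ⟨Or.inl (List.take_prefix i s.1), fun he => ?_⟩
  have := congrArg (fun t : TreeVert U => t.1.length) he
  simp only [pre, List.length_take] at this
  omega

variable (f : bigGraph U →g U)

/-- Invariant: the entries of `s` are the `f`-images of its proper prefixes. -/
def Inv (s : TreeVert U) : Prop :=
  ∀ (i : ℕ) (h : i < s.1.length), s.1[i] = f (Sum.inl (pre U s i))

lemma extend_pairwise (s : TreeVert U) (hs : Inv U f s) :
    (s.1 ++ [f (Sum.inl s)]).Pairwise U.Adj := by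
  rw [List.pairwise_append]
  refine ⟨s.2, List.pairwise_singleton _ _, ?_⟩
  intro y hy z hz
  rw [List.mem_singleton] at hz
  subst hz
  obtain ⟨i, hi, rfl⟩ := List.mem_iff_getElem.mp hy
  rw [hs i hi]
  exact f.map_adj (show (bigGraph U).Adj (Sum.inl (pre U s i)) (Sum.inl s)
    from pre_adj U s i hi)

/-- Extend a branch by the image of the homomorphism. -/
def extend (s : TreeVert U) (hs : Inv U f s) : TreeVert U :=
  ⟨s.1 ++ [f (Sum.inl s)], extend_pairwise U f s hs⟩

lemma inv_extend (s : TreeVert U) (hs : Inv U f s) : Inv U f (extend U f s hs) := by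
  intro i h
  have hlen : (extend U f s hs).1.length = s.1.length + 1 := by
    simp [extend]
  rcases lt_or_eq_of_le (Nat.lt_succ_iff.mp (hlen ▸ h)) with hi | hi
  · have h1 : (extend U f s hs).1[i] = s.1[i] := List.getElem_append_left hi
    have h2 : pre U (extend U f s hs) i = pre U s i := by
      apply Subtype.ext
      exact List.take_append_of_le_length (le_of_lt hi)
    rw [h1, h2]
    exact hs i hi
  · subst hi
    have h1 : (extend U f s hs).1[s.1.length] = f (Sum.inl s) := by
      show (s.1 ++ [f (Sum.inl s)])[s.1.length] = _
      exact List.getElem_concat_length rfl _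
    have h2 : pre U (extend U f s hs) s.1.length = s := by
      apply Subtype.ext
      exact List.take_left
    rw [h1, h2]

/-- The infinite branch built by iterating `extend`. -/
noncomputable def branch : ℕ → {s : TreeVert U // Inv U f s}
  | 0 => ⟨⟨[], List.Pairwise.nil⟩, fun i h => by simp at h⟩
  | n + 1 => ⟨extend U f (branch n).1 (branch n).2, inv_extend U f _ _⟩

lemma branch_length (n : ℕ) : ((branch U f n).1).1.length = n := by
  induction n with
  | zero => rfl
  | succ n ih => simp [branch, extend, ih]

lemma branch_prefix {n m : ℕ} (h : n ≤ m) :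
    ((branch U f n).1).1 <+: ((branch U f m).1).1 := by
  induction m with
  | zero => rw [Nat.le_zero.mp h]
  | succ m ih =>
    rcases Nat.lt_succ_iff_lt_or_eq.mp (Nat.lt_succ_of_le h) with h' | h'
    · exact (ih (Nat.lt_succ_iff.mp h')).trans (List.prefix_append _ _)
    · rw [h']
  
lemma branch_adj {n m : ℕ} (h : n < m) :
    treeAdj U (branch U f n).1 (branch U f m).1 := by
  refine ⟨Or.inl (branch_prefix U f (le_of_lt h)), fun he => ?_⟩
  have h2 : ((branch U f n).1).1.length = ((branch U f m).1).1.length := by rw [he]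
  rw [branch_length, branch_length] at h2
  omega

end NoHomUniv

open NoHomUniv in
/-- There is no hom-universal graph for the class of countable non-bipartite
`K_ω`-free graphs: for every countable `K_ω`-free graph `U` there is a countable
non-bipartite `K_ω`-free graph `G` with no homomorphism `G → U`. -/
theorem no_homUniversal_countable_KOmegaFree {V : Type} [Countable V]
    (U : SimpleGraph V) (hU : KOmegaFree U) :
    ∃ (W : Type) (_ : Countable W) (G : SimpleGraph W),
      ¬ G.Colorable 2 ∧ KOmegaFree G ∧ ¬ Nonempty (G →g U) := by
  haveI : Countable (TreeVert U) := by
    unfold TreeVert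
    infer_instance
  refine ⟨TreeVert U ⊕ Fin 3, inferInstance, bigGraph U, ?_, ?_, ?_⟩
  · -- not 2-colorable: triangle on the `Fin 3` part
    rintro ⟨c⟩
    have hadj : ∀ i j : Fin 3, i ≠ j →
        (bigGraph U).Adj (Sum.inr i) (Sum.inr j) := fun i j h => h
    have h01 := c.valid (hadj 0 1 (by decide))
    have h02 := c.valid (hadj 0 2 (by decide))
    have h12 := c.valid (hadj 1 2 (by decide))
    have v0 := (c (Sum.inr 0)).isLt
    have v1 := (c (Sum.inr 1)).isLt
    have v2 := (c (Sum.inr 2)).isLt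
    rw [Fin.ne_iff_vne] at h01 h02 h12
    omega
  · -- KOmegaFree
    rintro ⟨S, hSinf, hSpair⟩
    set S' : Set (TreeVert U) := {s | Sum.inl s ∈ S} with hS'
    have hsub : S ⊆ Sum.inl '' S' ∪ Set.range Sum.inr := by
      rintro (s | i) hx
      · exact Or.inl ⟨s, hx, rfl⟩
      · exact Or.inr ⟨i, rfl⟩
    have hS'inf : S'.Infinite := by
      intro hfin
      exact hSinf (((hfin.image _).union (Set.finite_range Sum.inr)).subset hsub)
    have hcomp : ∀ s ∈ S', ∀ t ∈ S', s ≠ t → treeAdj U s t := by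
      intro s hs t ht hne
      exact hSpair hs ht (fun h => hne (Sum.inl.inj h))
    have hinj : Set.InjOn (fun s : TreeVert U => s.1.length) S' := by
      intro s hs t ht h
      by_contra hne
      rcases (hcomp s hs t ht hne).1 with hp | hp
      · exact hne (Subtype.ext (hp.eq_of_length h))
      · exact hne (Subtype.ext (hp.eq_of_length h.symm).symm)
    have hex : ∀ n : ℕ, ∃ s ∈ S', n < s.1.length := by
      by_contra h
      push_neg at h
      obtain ⟨n, hn⟩ := h
      have himg : ((fun s : TreeVert U => s.1.length) '' S').Finite :=
        (Set.finite_Iic n).subset (by rintro _ ⟨s, hs, rfl⟩; exact hn s hs)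
      exact hS'inf (Set.Finite.of_finite_image himg hinj)
    choose t ht hlen using hex
    set E : ℕ → V := fun n => (t n).1[n]'(hlen n) with hE
    have hEadj : ∀ n m : ℕ, n < m → U.Adj (E n) (E m) := by
      intro n m hnm
      have hcases : (t n).1 <+: (t m).1 ∨ (t m).1 <+: (t n).1 := by
        by_cases heq : t n = t m
        · exact Or.inl (heq ▸ List.prefix_refl _)
        · exact (hcomp _ (ht n) _ (ht m) heq).1
      rcases hcases with hp | hp
      · have h1 : E n = (t m).1[n]'(lt_trans hnm (hlen m)) := by
          simp only [hE]
          exact hp.getElem (hlen n)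
        rw [h1]
        exact List.pairwise_iff_getElem.mp (t m).2 n m _ _ hnm
      · have hm : m < (t n).1.length := lt_of_lt_of_le (hlen m) hp.length_le
        have h1 : E m = (t n).1[m]'hm := by
          simp only [hE]
          exact hp.getElem (hlen m)
        rw [h1]
        exact List.pairwise_iff_getElem.mp (t n).2 n m _ _ hnm
    have hEinj : Function.Injective E := by
      intro n m h
      by_contra hne
      rcases Nat.lt_or_ge n m with h' | h'
      · exact (hEadj n m h').ne h
      · exact (hEadj m n (lt_of_le_of_ne h' (Ne.symm hne))).ne h.symm
    refine hU ⟨Set.range E, Set.infinite_range_of_injective hEinj, ?_⟩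
    rintro _ ⟨n, rfl⟩ _ ⟨m, rfl⟩ hne
    rcases Nat.lt_or_ge n m with h' | h'
    · exact hEadj n m h'
    · exact (hEadj m n (lt_of_le_of_ne h' (fun h => hne (h ▸ rfl)))).symm
  · -- no homomorphism
    rintro ⟨f⟩
    set a : ℕ → V := fun n => f (Sum.inl (branch U f n).1) with ha
    have hadj : ∀ n m : ℕ, n < m → U.Adj (a n) (a m) := by
      intro n m h
      exact f.map_adj (show (bigGraph U).Adj (Sum.inl (branch U f n).1)
        (Sum.inl (branch U f m).1) from branch_adj U f h)
    have hainj : Function.Injective a := by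
      intro n m h
      by_contra hne
      rcases Nat.lt_or_ge n m with h' | h'
      · exact (hadj n m h').ne h
      · exact (hadj m n (lt_of_le_of_ne h' (Ne.symm hne))).ne h.symm
    refine hU ⟨Set.range a, Set.infinite_range_of_injective hainj, ?_⟩
    rintro _ ⟨n, rfl⟩ _ ⟨m, rfl⟩ hne
    rcases Nat.lt_or_ge n m with h' | h'
    · exact hadj n m h'
    · exact (hadj m n (lt_of_le_of_ne h' (fun h => hne (h ▸ rfl)))).symm
end

section
/- Let U be a simple graph and let U ⊕ x denote the graph obtained from U by adding one new vertex x joined to every vertex of U. If there exists a graph homomorphism from U ⊕ x to U, then U contains an infinite set of pairwise adjacent vertices (an infinite complete subgraph). -/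
/-- The cone `U ⊕ x` over a graph `U`: one new vertex (`none`) joined to every
vertex of `U`, all edges of `U` kept. -/
def cone {V : Type*} (U : SimpleGraph V) : SimpleGraph (Option V) where
  Adj a b := a ≠ b ∧ ∀ u v, a = some u → b = some v → U.Adj u v
  symm := by
    constructor
    rintro a b ⟨hne, h⟩
    exact ⟨hne.symm, fun u v hb ha => (h v u ha hb).symm⟩
  loopless := by
    constructor
    rintro a ⟨hne, -⟩
    exact hne rfl

/-!
If `f : U ⊕ x →g U`, put `a := f x` and `φ := f ∘ some`, an endomorphism of `U` whose image is
adjacent to `a`. Then `a, φ a, φ² a, …` are pairwise adjacent: `a` is adjacent to every `φⁿ a`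
with `n ≥ 1`, and applying `φ` preserves adjacency, so `φᵐ a ~ φⁿ a` whenever `m < n`.
Adjacent vertices are distinct, so this sequence is an infinite clique.
-/

namespace SimpleGraph

variable {V : Type*} {U : SimpleGraph V}

theorem exists_infinite_clique_of_pairwise {b : ℕ → V}
    (hb : Pairwise fun i j => U.Adj (b i) (b j)) : ∃ S : Set V, S.Infinite ∧ S.Pairwise U.Adj :=
  ⟨Set.range b,
    Set.infinite_range_of_injective
      (Function.injective_iff_pairwise_ne.2 (hb.mono fun _ _ => Adj.ne)),
    hb.range_pairwise⟩

theorem Hom.adj_iterate_of_lt (φ : U →g U) {a : V} (ha : ∀ v, U.Adj a (φ v)) :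
    ∀ {m n : ℕ}, m < n → U.Adj (φ^[m] a) (φ^[n] a)
  | 0, n + 1, _ => by
    rw [Function.iterate_succ_apply']
    exact ha _
  | m + 1, n + 1, h => by
    rw [Function.iterate_succ_apply', Function.iterate_succ_apply']
    exact φ.map_adj (adj_iterate_of_lt φ ha (Nat.lt_of_succ_lt_succ h))

theorem Hom.exists_infinite_clique_of_adj_range (φ : U →g U) {a : V}
    (ha : ∀ v, U.Adj a (φ v)) : ∃ S : Set V, S.Infinite ∧ S.Pairwise U.Adj :=
  exists_infinite_clique_of_pairwise (b := fun n => φ^[n] a) <|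
    Pairwise.of_lt fun _ _ => φ.adj_iterate_of_lt ha

end SimpleGraph

section Cone

variable {V : Type*} {U : SimpleGraph V}

theorem cone_adj_none_some (v : V) : (cone U).Adj none (some v) :=
  ⟨(Option.some_ne_none v).symm, fun _ _ h => (Option.some_ne_none _ h.symm).elim⟩

theorem cone_adj_some_some {u v : V} : (cone U).Adj (some u) (some v) ↔ U.Adj u v :=
  ⟨fun h => h.2 u v rfl rfl, fun h => ⟨Option.some_injective _ |>.ne h.ne, by
    rintro _ _ ⟨⟩ ⟨⟩
    exact h⟩⟩

def coneIncl (U : SimpleGraph V) : U →g cone U where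
  toFun := some
  map_rel' := cone_adj_some_some.2

end Cone

/-- If the cone over `U` admits a homomorphism into `U`, then `U` contains an
infinite set of pairwise adjacent vertices. -/
theorem infinite_clique_of_cone_hom {V : Type*} (U : SimpleGraph V)
    (h : Nonempty (cone U →g U)) :
    ∃ S : Set V, S.Infinite ∧ S.Pairwise U.Adj := by
  obtain ⟨f⟩ := h
  exact (f.comp (coneIncl U)).exists_infinite_clique_of_adj_range
    fun v => f.map_adj (cone_adj_none_some v)
end

section
/- For every countable non-bipartite K_ω-free simple graph G, the pair (G, K_ω) is not a gap in the class of countable graphs: there exists a countable K_ω-free simple graph F such that there is a homomorphism G → F but no homomorphism F → G. -/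
namespace NoGapAux

variable {V : Type} (G : SimpleGraph V)

/-- Nodes of the clique tree of `G`: finite lists of vertices that are
pairwise adjacent (hence form a finite clique). -/
abbrev Node : Type := {l : List V // l.Pairwise G.Adj}

/-- The comparability graph of the clique tree of `G`: two nodes are adjacent
iff one is a proper prefix of the other. -/
def HG : SimpleGraph (Node G) := SimpleGraph.fromRel (fun a b => a.val <+: b.val)

lemma HG_adj {a b : Node G} :
    (HG G).Adj a b ↔ a ≠ b ∧ (a.val <+: b.val ∨ b.val <+: a.val) :=
  SimpleGraph.fromRel_adj _ _ _

/-- If two nodes are adjacent and the first is shorter, it is a prefix. -/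
lemma adj_prefix {a b : Node G} (hab : (HG G).Adj a b)
    (hlen : a.val.length < b.val.length) : a.val <+: b.val := by
  rcases (HG_adj G).1 hab with ⟨_, hp | hp⟩
  · exact hp
  · exact absurd hp.length_le (by omega)

/-- Adjacent nodes have different lengths. -/
lemma adj_len_ne {a b : Node G} (hab : (HG G).Adj a b) :
    a.val.length ≠ b.val.length := by
  intro h
  rcases (HG_adj G).1 hab with ⟨hne, hp | hp⟩
  · exact hne (Subtype.ext (hp.eq_of_length h))
  · exact hne (Subtype.ext (hp.eq_of_length h.symm).symm)

/-- If `a, b` are adjacent nodes with `a` shorter, their last entries are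
adjacent vertices of `G`. -/
lemma adj_of_last {a b : Node G} (hab : (HG G).Adj a b)
    {x y : V} (hx : a.val.getLast? = some x) (hy : b.val.getLast? = some y)
    (hlen : a.val.length < b.val.length) : G.Adj x y := by
  have hpre : a.val <+: b.val := adj_prefix G hab hlen
  have hane : a.val ≠ [] := by
    intro h; rw [h] at hx; simp at hx
  have hbne : b.val ≠ [] := by
    intro h; rw [h] at hy; simp at hy
  rw [List.getLast?_eq_getLast hane, Option.some_inj] at hx
  rw [List.getLast?_eq_getLast hbne, Option.some_inj] at hy
  rw [List.getLast_eq_getElem] at hx hy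
  have h1 : 0 < a.val.length := List.length_pos_iff.2 hane
  have hidx : a.val.length - 1 < b.val.length := by omega
  have hx' : b.val[a.val.length - 1]'hidx = x := by
    rw [← hpre.getElem (show a.val.length - 1 < a.val.length by omega)]
    exact hx
  have hmain := List.pairwise_iff_getElem.1 b.2 (a.val.length - 1) (b.val.length - 1)
    hidx (by omega) (by omega)
  rwa [hx', hy] at hmain

/-- The clique-tree graph of a `K_ω`-free graph is `K_ω`-free. -/
lemma HG_free (hfree : KOmegaFree G) : KOmegaFree (HG G) := by
  rintro ⟨S, hSinf, hSpair⟩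
  apply hfree
  set g : Node G → Option V := fun a => a.val.getLast? with hg
  have key : ∀ a ∈ S, ∀ b ∈ S, a ≠ b → a.val.length < b.val.length →
      g a ≠ g b := by
    intro a ha b hb hne hlt heq
    simp only [hg] at heq
    rcases hcase : a.val.getLast? with _ | x
    · have ha0 : a.val = [] := by
        cases h : a.val with
        | nil => rfl
        | cons u l => rw [h] at hcase; simp at hcase
      have hb0 : b.val.getLast? = none := by
        rw [← heq]; simpa [hg] using hcase
      have : b.val = [] := by
        cases h : b.val with
        | nil => rfl
        | cons u l => rw [h] at hb0; simp at hb0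
      rw [ha0, this] at hlt; simp at hlt
    · have hbx : b.val.getLast? = some x := by
        rw [← heq]; simpa [hg] using hcase
      exact G.irrefl (adj_of_last G (hSpair ha hb hne) hcase hbx hlt)
  have hinj : Set.InjOn g S := by
    intro a ha b hb heq
    by_contra hne
    have hlen := adj_len_ne G (hSpair ha hb hne)
    rcases Nat.lt_or_ge a.val.length b.val.length with hlt | hge
    · exact key a ha b hb hne hlt heq
    · exact key b hb a ha (Ne.symm hne) (lt_of_le_of_ne hge (Ne.symm hlen)) heq.symm
  refine ⟨{x : V | some x ∈ g '' S}, ?_, ?_⟩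
  · have himg : (g '' S).Infinite := hSinf.image hinj
    have hsub : (g '' S) \ {none} ⊆ Option.some '' {x : V | some x ∈ g '' S} := by
      rintro o ⟨ho, hne⟩
      cases o with
      | none => exact absurd rfl hne
      | some x => exact ⟨x, ho, rfl⟩
    have : (Option.some '' {x : V | some x ∈ g '' S}).Infinite :=
      ((himg.diff (Set.finite_singleton none))).mono hsub
    exact Set.Infinite.of_image _ this
  · rintro x ⟨a, ha, hax⟩ y ⟨b, hb, hby⟩ hxy
    have hne : a ≠ b := by
      rintro rfl
      rw [hax] at hby
      exact hxy (Option.some_inj.1 hby)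
    have hadj := hSpair ha hb hne
    have hlen := adj_len_ne G hadj
    rcases Nat.lt_or_ge a.val.length b.val.length with hlt | hge
    · exact adj_of_last G hadj hax hby hlt
    · exact (adj_of_last G hadj.symm hby hax
        (lt_of_le_of_ne hge (Ne.symm hlen))).symm

/-- Invariant for the diagonal sequence: the node has length `n` and every
entry is the image under `f` of a shorter prefix node. -/
def Inv (f : HG G →g G) (n : ℕ) (a : Node G) : Prop :=
  a.val.length = n ∧ ∀ x ∈ a.val, ∃ b : Node G,
    b.val <+: a.val ∧ b.val.length < a.val.length ∧ x = f b

/-- The diagonal sequence against a purported homomorphism `HG G →g G`. -/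
def seq (f : HG G →g G) : (n : ℕ) → {a : Node G // Inv G f n a}
  | 0 => ⟨⟨[], List.Pairwise.nil⟩, rfl, by simp⟩
  | n + 1 =>
    match seq f n with
    | ⟨a, hinv⟩ =>
    have hlen := hinv.1
    have hmem := hinv.2
    have hadj : ∀ x ∈ a.val, G.Adj x (f a) := by
      intro x hx
      obtain ⟨b, hpre, hlt, hxb⟩ := hmem x hx
      have hb : (HG G).Adj b a := (HG_adj G).2
        ⟨fun h => by rw [h] at hlt; omega, Or.inl hpre⟩
      rw [hxb]
      exact f.map_adj hb
    have hpair : (a.val ++ [f a]).Pairwise G.Adj := by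
      rw [List.pairwise_append]
      exact ⟨a.2, List.pairwise_singleton _ _, by simpa using hadj⟩
    ⟨⟨a.val ++ [f a], hpair⟩, by
      constructor
      · simpa using hlen
      · intro x hx
        rcases List.mem_append.1 hx with hx' | hx'
        · obtain ⟨b, hpre, hlt, hxb⟩ := hmem x hx'
          exact ⟨b, hpre.trans (List.prefix_append _ _), by simp; omega, hxb⟩
        · refine ⟨a, List.prefix_append _ _, by simp, ?_⟩
          simpa using hx'⟩

lemma seq_succ_val (f : HG G →g G) (n : ℕ) :
    (seq G f (n + 1)).1.val = (seq G f n).1.val ++ [f (seq G f n).1] := by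
  rw [seq]

lemma seq_prefix (f : HG G →g G) {i j : ℕ} (h : i ≤ j) :
    (seq G f i).1.val <+: (seq G f j).1.val := by
  induction j with
  | zero =>
    have : i = 0 := Nat.le_zero.1 h
    subst this; rfl
  | succ n ih =>
    rcases Nat.lt_or_ge i (n + 1) with h' | h'
    · have := ih (Nat.lt_succ_iff.1 h')
      calc (seq G f i).1.val <+: (seq G f n).1.val := this
        _ <+: (seq G f (n+1)).1.val := by
          rw [seq_succ_val]
          exact List.prefix_append _ _
    · have : i = n + 1 := le_antisymm h h'
      subst this; rfl

lemma seq_adj (f : HG G →g G) {i j : ℕ} (h : i < j) :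
    (HG G).Adj (seq G f i).1 (seq G f j).1 := by
  refine (HG_adj G).2 ⟨?_, Or.inl (seq_prefix G f h.le)⟩
  intro heq
  have hi := (seq G f i).2.1
  have hj := (seq G f j).2.1
  rw [heq, hj] at hi
  omega

/-- There is no homomorphism from the clique-tree graph of `G` to `G`
when `G` is `K_ω`-free. -/
lemma no_hom (hfree : KOmegaFree G) : ¬ Nonempty (HG G →g G) := by
  rintro ⟨f⟩
  apply hfree
  refine ⟨Set.range (fun n => f (seq G f n).1), ?_, ?_⟩
  · apply Set.infinite_range_of_injective
    intro i j hij
    have hij' : f (seq G f i).1 = f (seq G f j).1 := hij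
    by_contra hne
    have hadj : G.Adj (f (seq G f i).1) (f (seq G f j).1) := by
      rcases Nat.lt_or_ge i j with h | h
      · exact f.map_adj (seq_adj G f h)
      · exact (f.map_adj (seq_adj G f (lt_of_le_of_ne h (Ne.symm hne)))).symm
    rw [hij'] at hadj
    exact G.irrefl hadj
  · rintro x ⟨i, rfl⟩ y ⟨j, rfl⟩ hxy
    rcases Nat.lt_trichotomy i j with h | h | h
    · exact f.map_adj (seq_adj G f h)
    · exact absurd (by rw [h]) hxy
    · exact (f.map_adj (seq_adj G f h)).symm

/-- The disjoint sum of two `K_ω`-free graphs is `K_ω`-free. -/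
lemma sum_free {α β : Type} {A : SimpleGraph α} {B : SimpleGraph β}
    (hA : KOmegaFree A) (hB : KOmegaFree B) : KOmegaFree (A ⊕g B) := by
  rintro ⟨S, hSinf, hSpair⟩
  by_cases hl : ∃ a, Sum.inl a ∈ S
  · -- everything is on the left
    obtain ⟨a, ha⟩ := hl
    have hsub : S ⊆ Set.range Sum.inl := by
      rintro x hx
      cases x with
      | inl u => exact ⟨u, rfl⟩
      | inr u =>
        have hne : (Sum.inl a : α ⊕ β) ≠ Sum.inr u := by simp
        have := hSpair ha hx hne
        simp [SimpleGraph.sum] at this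
    apply hA
    refine ⟨Sum.inl ⁻¹' S, hSinf.preimage hsub, ?_⟩
    intro u hu v hv huv
    have := hSpair hu hv (by simpa using huv)
    simpa [SimpleGraph.sum] using this
  · have hsub : S ⊆ Set.range Sum.inr := by
      rintro x hx
      cases x with
      | inl u => exact absurd ⟨u, hx⟩ hl
      | inr u => exact ⟨u, rfl⟩
    apply hB
    refine ⟨Sum.inr ⁻¹' S, hSinf.preimage hsub, ?_⟩
    intro u hu v hv huv
    have := hSpair hu hv (by simpa using huv)
    simpa [SimpleGraph.sum] using this

end NoGapAux

/-- For every countable non-bipartite `K_ω`-free graph `G`, the pair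
`(G, K_ω)` is not a gap: there is a countable `K_ω`-free graph `F` with
`G → F` but `F ↛ G`. -/
theorem no_gap_below_KOmega {V : Type} [Countable V] (G : SimpleGraph V)
    (hnb : ¬ G.Colorable 2) (hfree : KOmegaFree G) :
    ∃ (W : Type) (_ : Countable W) (F : SimpleGraph W),
      KOmegaFree F ∧ Nonempty (G →g F) ∧ ¬ Nonempty (F →g G) := by
  refine ⟨V ⊕ NoGapAux.Node G, inferInstance,
    G ⊕g NoGapAux.HG G, ?_, ?_, ?_⟩
  · exact NoGapAux.sum_free hfree (NoGapAux.HG_free G hfree)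
  · exact ⟨SimpleGraph.Embedding.sumInl.toHom⟩
  · rintro ⟨f⟩
    exact NoGapAux.no_hom G hfree
      ⟨f.comp SimpleGraph.Embedding.sumInr.toHom⟩
end

section
/- For an ordinal α, let K_ω^{<α>} be the graph whose vertices are all finite strictly decreasing sequences of ordinals < α (including the empty sequence), two sequences being adjacent iff one is a proper initial segment of the other. Then: (a) for every countable ordinal α ≥ 2, K_ω^{<α>} is a countable, non-bipartite, K_ω-free graph; (b) for every countable K_ω-free simple graph G there exists a countable ordinal α such that there is no homomorphism K_ω^{<α>} → G. -/
/-- Finite strictly decreasing sequences of ordinals `< α` (including the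
empty sequence). -/
def DecSeq (α : Ordinal) : Type _ :=
  {l : List Ordinal // l.Chain' (· > ·) ∧ ∀ x ∈ l, x < α}

/-- The graph `K_ω^{<α>}`: vertices are finite strictly decreasing sequences
of ordinals `< α`, two sequences adjacent iff one is a proper initial segment
of the other. -/
def KOmegaTree (α : Ordinal) : SimpleGraph (DecSeq α) :=
  SimpleGraph.fromRel (fun ν μ => ν.1 <+: μ.1)

lemma kAdj {α : Ordinal} (ν μ : DecSeq α) :
    (KOmegaTree α).Adj ν μ ↔ ν ≠ μ ∧ (ν.1 <+: μ.1 ∨ μ.1 <+: ν.1) :=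
  SimpleGraph.fromRel_adj _ ν μ

section Aux

variable {α : Ordinal} {V : Type} {G : SimpleGraph V}

/-- the length-`n` prefix of a decreasing sequence -/
def DecSeq.pre (s : DecSeq α) (n : ℕ) : DecSeq α :=
  ⟨s.1.take n,
    List.isChain_iff_pairwise.mpr ((List.isChain_iff_pairwise.mp s.2.1).sublist
      (List.take_sublist n s.1)),
    fun x hx => s.2.2 x (List.take_subset n s.1 hx)⟩

lemma DecSeq.pre_adj (s : DecSeq α) {i j : ℕ} (hij : i < j) (hj : j ≤ s.1.length) :
    (KOmegaTree α).Adj (s.pre i) (s.pre j) := by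
  refine (kAdj _ _).mpr ⟨?_, Or.inl ?_⟩
  · intro e
    have := congrArg (fun t : DecSeq α => t.1.length) e
    simp only [DecSeq.pre, List.length_take] at this
    omega
  · show s.1.take i <+: s.1.take j
    have : s.1.take i = (s.1.take j).take i := by
      rw [List.take_take, min_eq_left hij.le]
    rw [this]
    exact List.take_prefix _ _

/-- append a smaller ordinal at the end of a decreasing sequence -/
def DecSeq.snoc (s : DecSeq α) (δ : Ordinal) (hδα : δ < α) (hlt : ∀ x ∈ s.1, δ < x) :
    DecSeq α :=
  ⟨s.1 ++ [δ],
    List.isChain_append.mpr ⟨s.2.1, List.isChain_singleton δ, by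
      intro x hx y hy
      simp only [List.head?_cons, Option.mem_def, Option.some.injEq] at hy
      subst hy
      exact hlt x (List.mem_of_mem_getLast? hx)⟩,
    by
      intro x hx
      rcases List.mem_append.mp hx with h | h
      · exact s.2.2 x h
      · simp only [List.mem_singleton] at h; subst h; exact hδα⟩

/-- images under a homomorphism of all prefixes of `s` -/
def cliqueList (h : KOmegaTree α →g G) (s : DecSeq α) : List V :=
  (List.range (s.1.length + 1)).map (fun n => h (s.pre n))

lemma cliqueList_pairwise (h : KOmegaTree α →g G) (s : DecSeq α) :
    (cliqueList h s).Pairwise G.Adj := by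
  rw [List.pairwise_iff_getElem]
  intro i j hi hj hij
  simp only [cliqueList, List.length_map, List.length_range] at hi hj
  simp only [cliqueList, List.getElem_map, List.getElem_range]
  exact h.map_adj (s.pre_adj hij (by omega))

lemma cliqueList_snoc (h : KOmegaTree α →g G) (s : DecSeq α) (δ : Ordinal)
    (hδα : δ < α) (hlt : ∀ x ∈ s.1, δ < x) :
    cliqueList h (s.snoc δ hδα hlt) =
      cliqueList h s ++ [h (s.snoc δ hδα hlt)] := by
  have hlen : (s.snoc δ hδα hlt).1.length = s.1.length + 1 := by
    simp [DecSeq.snoc]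
  rw [cliqueList, hlen, List.range_succ, List.map_append]
  congr 1
  · refine List.map_congr_left fun n hn => ?_
    rw [List.mem_range] at hn
    congr 1
    apply Subtype.ext
    show (s.1 ++ [δ]).take n = s.1.take n
    rw [List.take_append]
    have : n - s.1.length = 0 := by omega
    rw [this]
    simp
  · simp only [List.map_cons, List.map_nil]
    congr 2
    apply Subtype.ext
    show (s.snoc δ hδα hlt).1.take (s.1.length + 1) = (s.snoc δ hδα hlt).1
    rw [← hlen, List.take_length]

end Aux


universe u v

lemma decSeq_countable (α : Ordinal.{u}) (hcard : α.card ≤ Cardinal.aleph0) :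
    Countable (DecSeq α) := by
  have hio : Countable (Set.Iio α) := by
    rw [← Cardinal.mk_le_aleph0_iff, Ordinal.mk_Iio_ordinal]
    simpa using Cardinal.lift_le.mpr hcard
  have hinj : Function.Injective
      (fun s : DecSeq α => s.1.pmap (fun x hx => (⟨x, hx⟩ : Set.Iio α)) s.2.2) := by
    intro s t hst
    apply Subtype.ext
    have := congrArg (List.map Subtype.val) hst
    erw [List.map_pmap, List.map_pmap, List.pmap_eq_map, List.pmap_eq_map, List.map_id', List.map_id'] at this
    exact this
  exact hinj.countable

lemma kOmegaTree_not_colorable (α : Ordinal.{u}) (h2 : 2 ≤ α) :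
    ¬ (KOmegaTree α).Colorable 2 := by
  rintro ⟨c⟩
  have h0 : (0 : Ordinal) < α := lt_of_lt_of_le (by norm_num) h2
  have h1 : (1 : Ordinal) < α := lt_of_lt_of_le one_lt_two h2
  let v0 : DecSeq α := ⟨[], List.isChain_nil, by simp⟩
  let v1 : DecSeq α := ⟨[1], List.isChain_singleton _, by simpa using h1⟩
  let v2 : DecSeq α := ⟨[1, 0], by
      simp only [List.Chain', List.isChain_cons_cons, List.isChain_singleton, and_true]
      exact zero_lt_one, by
      intro x hx
      rcases List.mem_cons.mp hx with rfl | hx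
      · exact h1
      · simp only [List.mem_singleton] at hx; subst hx; exact h0⟩
  have a01 : (KOmegaTree α).Adj v0 v1 := by
    refine (kAdj _ _).mpr ⟨?_, Or.inl (List.nil_prefix)⟩
    intro e; simpa using congrArg (fun s : DecSeq α => s.1) e
  have a02 : (KOmegaTree α).Adj v0 v2 := by
    refine (kAdj _ _).mpr ⟨?_, Or.inl (List.nil_prefix)⟩
    intro e; simpa using congrArg (fun s : DecSeq α => s.1) e
  have a12 : (KOmegaTree α).Adj v1 v2 := by
    refine (kAdj _ _).mpr ⟨?_, Or.inl ⟨[0], rfl⟩⟩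
    intro e; simpa [v1, v2] using congrArg (fun s : DecSeq α => s.1) e
  have e01 : (c v0).val ≠ (c v1).val := fun h => c.valid a01 (Fin.ext h)
  have e02 : (c v0).val ≠ (c v2).val := fun h => c.valid a02 (Fin.ext h)
  have e12 : (c v1).val ≠ (c v2).val := fun h => c.valid a12 (Fin.ext h)
  have b0 := (c v0).isLt
  have b1 := (c v1).isLt
  have b2 := (c v2).isLt
  omega

lemma kOmegaTree_kOmega_free (α : Ordinal.{u}) :
    ¬ ∃ S : Set (DecSeq α), S.Infinite ∧ S.Pairwise (KOmegaTree α).Adj := by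
  rintro ⟨S, hInf, hPair⟩
  haveI : Infinite S := hInf.to_subtype
  have hinj : Function.Injective (fun s : S => s.1.1.length) := by
    rintro ⟨s, hs⟩ ⟨t, ht⟩ hlen
    simp only at hlen
    refine Subtype.ext ?_
    by_contra hne
    rcases (kAdj _ _).mp (hPair hs ht hne) with ⟨-, hp | hp⟩
    · exact hne (Subtype.ext (hp.eq_of_length hlen))
    · exact hne (Subtype.ext (hp.eq_of_length hlen.symm)).symm
  have hrange : (Set.range fun s : S => s.1.1.length).Infinite :=
    Set.infinite_range_of_injective hinj
  have hbig : ∀ n : ℕ, ∃ s : DecSeq α, s ∈ S ∧ n < s.1.length := by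
    intro n
    obtain ⟨b, ⟨s, rfl⟩, hb⟩ := hrange.exists_gt n
    exact ⟨s.1, s.2, hb⟩
  choose F hFS hFlen using hbig
  have agree : ∀ m n i, (him : i < (F m).1.length) → (hin : i < (F n).1.length) →
      (F m).1[i] = (F n).1[i] := by
    intro m n i him hin
    rcases eq_or_ne (F m) (F n) with e | e
    · have : (F m).1[i]? = (F n).1[i]? := by rw [e]
      simpa [List.getElem?_eq_getElem him, List.getElem?_eq_getElem hin] using this
    · rcases (kAdj _ _).mp (hPair (hFS m) (hFS n) e) with ⟨-, hp | hp⟩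
      · exact hp.getElem him
      · exact (hp.getElem hin).symm
  have hdec : ∀ n : ℕ,
      (F (n+1)).1[n+1]'(hFlen (n+1)) < (F n).1[n]'(hFlen n) := by
    intro n
    have hlt : n < (F (n+1)).1.length := Nat.lt_of_le_of_lt (Nat.le_succ n) (hFlen (n+1))
    have h1 : (F n).1[n]'(hFlen n) = (F (n+1)).1[n]'hlt := agree n (n+1) n (hFlen n) hlt
    rw [h1]
    have hp := List.isChain_iff_pairwise.mp (F (n+1)).2.1
    exact List.pairwise_iff_getElem.mp hp n (n+1) hlt (hFlen (n+1)) n.lt_succ_self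
  exact (RelEmbedding.wellFounded_iff_isEmpty.mp
    Ordinal.lt_wf).false
    (RelEmbedding.natGT (fun n => (F n).1[n]'(hFlen n)) hdec)

lemma partB (V : Type) [Countable V] (G : SimpleGraph V)
    (hG : ¬ ∃ S : Set V, S.Infinite ∧ S.Pairwise G.Adj) :
    ∃ α : Ordinal.{v}, α.card ≤ Cardinal.aleph0 ∧ ¬ Nonempty (KOmegaTree α →g G) := by
  classical
  let C := {l : List V // l.Pairwise G.Adj}
  let r : C → C → Prop := fun x y => y.1 <+: x.1 ∧ y.1.length < x.1.length
  haveI : IsIrrefl C r := ⟨fun a ha => lt_irrefl _ ha.2⟩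
  haveI : IsTrans C r := ⟨fun a b c hab hbc => ⟨hbc.1.trans hab.1, hbc.2.trans hab.2⟩⟩
  haveI : IsStrictOrder C r := ⟨⟩
  have hwf : WellFounded r := by
    rw [RelEmbedding.wellFounded_iff_isEmpty]
    refine ⟨fun f => ?_⟩
    have hstep : ∀ n : ℕ, r (f (n+1)) (f n) := fun n => f.map_rel_iff.mpr n.lt_succ_self
    have chain : ∀ m n : ℕ, m ≤ n → ((f m).1 : List V) <+: (f n).1 := by
      intro m n hmn
      induction hmn with
      | refl => exact List.prefix_refl _
      | step h ih => exact ih.trans (hstep _).1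
    have hlen : ∀ n : ℕ, n ≤ ((f n).1 : List V).length := by
      intro n
      induction n with
      | zero => exact Nat.zero_le _
      | succ k ih => have := (hstep k).2; omega
    refine hG ⟨{v | ∃ n, v ∈ ((f n).1 : List V)}, ?_, ?_⟩
    · by_contra hfin
      rw [Set.not_infinite] at hfin
      have hsub : ∀ n : ℕ, ((f n).1 : List V).toFinset ⊆ hfin.toFinset := by
        intro n v hv
        rw [Set.Finite.mem_toFinset]
        exact ⟨n, by simpa using hv⟩
      have hnd : ∀ n : ℕ, ((f n).1 : List V).Nodup :=
        fun n => (f n).2.imp G.ne_of_adj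
      have hcard : ∀ n : ℕ, n ≤ hfin.toFinset.card := by
        intro n
        calc n ≤ ((f n).1 : List V).length := hlen n
          _ = ((f n).1 : List V).toFinset.card := (List.toFinset_card_of_nodup (hnd n)).symm
          _ ≤ hfin.toFinset.card := Finset.card_le_card (hsub n)
      exact absurd (hcard (hfin.toFinset.card + 1)) (by omega)
    · rintro u ⟨m, hm⟩ v ⟨n, hn⟩ huv
      rcases le_total m n with hle | hle
      · haveI := G.symm; exact (f n).2.forall ((chain m n hle).subset hm) hn huv
      · haveI := G.symm; exact (f m).2.forall hm ((chain n m hle).subset hn) huv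
  let r' : ULift.{v} C → ULift.{v} C → Prop := fun x y => r x.down y.down
  letI : IsWellFounded (ULift.{v} C) r' := ⟨InvImage.wf ULift.down hwf⟩
  have hord : ∀ c : ULift.{v} C, IsWellFounded.rank r' c < (Cardinal.aleph 1).ord := by
    intro c
    refine IsWellFounded.induction r'
      (motive := fun c => IsWellFounded.rank r' c < (Cardinal.aleph 1).ord) c fun a IH => ?_
    show IsWellFounded.rank r' a < (Cardinal.aleph 1).ord
    rw [IsWellFounded.rank_eq]
    refine Ordinal.iSup_lt_ord ?_ fun b => ?_
    · rw [Cardinal.isRegular_aleph_one.cof_eq]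
      exact lt_of_le_of_lt Cardinal.mk_le_aleph0 Cardinal.aleph0_lt_aleph_one
    · exact (Cardinal.isSuccLimit_ord (Cardinal.aleph0_le_aleph 1)).succ_lt (IH b b.2)
  set α₀ := Ordinal.lsub (fun c : ULift.{v} C => IsWellFounded.rank r' c) with hα₀
  refine ⟨α₀, ?_, ?_⟩
  · have hlt : α₀ < (Cardinal.aleph 1).ord :=
      Ordinal.lsub_lt_ord (by
        rw [Cardinal.isRegular_aleph_one.cof_eq]
        exact lt_of_le_of_lt Cardinal.mk_le_aleph0 Cardinal.aleph0_lt_aleph_one) hord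
    have hcard := Cardinal.lt_ord.mp hlt
    rwa [← Cardinal.succ_aleph0, Order.lt_succ_iff] at hcard
  · rintro ⟨h⟩
    let K : DecSeq α₀ → ULift.{v} C := fun s => ⟨⟨cliqueList h s, cliqueList_pairwise h s⟩⟩
    have hrel : ∀ (s : DecSeq α₀) (δ : Ordinal) (hδα : δ < α₀) (hlt : ∀ x ∈ s.1, δ < x),
        r' (K (s.snoc δ hδα hlt)) (K s) := by
      intro s δ hδα hlt
      constructor
      · show cliqueList h s <+: cliqueList h (s.snoc δ hδα hlt)
        rw [cliqueList_snoc]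
        exact ⟨_, rfl⟩
      · show (cliqueList h s).length < (cliqueList h (s.snoc δ hδα hlt)).length
        rw [cliqueList_snoc]
        simp
    have L : ∀ γ : Ordinal, γ ≤ α₀ → ∀ s : DecSeq α₀, (∀ x ∈ s.1, γ ≤ x) →
        γ ≤ IsWellFounded.rank r' (K s) := by
      intro γ
      induction γ using Ordinal.induction with
      | _ γ IH =>
        intro hγα s hγs
        refine le_of_not_gt fun hcon => ?_
        have hδα : IsWellFounded.rank r' (K s) < α₀ := lt_of_lt_of_le hcon hγα
        have hlt : ∀ x ∈ s.1, IsWellFounded.rank r' (K s) < x :=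
          fun x hx => lt_of_lt_of_le hcon (hγs x hx)
        have hmem : ∀ x ∈ (s.snoc _ hδα hlt).1, IsWellFounded.rank r' (K s) ≤ x := by
          intro x hx
          rcases List.mem_append.mp hx with hx | hx
          · exact (hlt x hx).le
          · simp only [List.mem_singleton] at hx; subst hx; exact le_rfl
        have h1 := IH _ hcon hδα.le (s.snoc _ hδα hlt) hmem
        exact absurd (h1.trans_lt (IsWellFounded.rank_lt_of_rel (hrel s _ hδα hlt)))
          (lt_irrefl _)
    have hfin := L α₀ le_rfl ⟨[], List.isChain_nil, by simp⟩ (by simp)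
    exact absurd hfin (not_le.mpr (Ordinal.lt_lsub _ _))


/-- (a) For every countable ordinal `α ≥ 2`, `K_ω^{<α>}` is countable,
non-bipartite and `K_ω`-free; (b) for every countable `K_ω`-free graph `G`
there is a countable ordinal `α` with no homomorphism `K_ω^{<α>} → G`. -/
theorem KOmegaTree_properties :
    (∀ α : Ordinal, 2 ≤ α → α.card ≤ Cardinal.aleph0 →
      Countable (DecSeq α) ∧ ¬ (KOmegaTree α).Colorable 2 ∧
      ¬ ∃ S : Set (DecSeq α), S.Infinite ∧ S.Pairwise (KOmegaTree α).Adj) ∧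
    (∀ (V : Type) [Countable V] (G : SimpleGraph V),
      (¬ ∃ S : Set V, S.Infinite ∧ S.Pairwise G.Adj) →
      ∃ α : Ordinal, α.card ≤ Cardinal.aleph0 ∧
        ¬ Nonempty (KOmegaTree α →g G)) := by
  exact ⟨fun α h2 hcard => ⟨decSeq_countable α hcard, kOmegaTree_not_colorable α h2,
    kOmegaTree_kOmega_free α⟩, fun V _ G hG => partB V G hG⟩
end

section
/- Let G¹ be the graph on vertex set ℕ × {0,1} whose edges are: all pairs {(n,i),(m,i)} with n ≠ m and ⌊√n⌋ = ⌊√m⌋ (i ∈ {0,1}), and all pairs {(n,0),(m,1)} with n < m. Let G² be the graph consisting of a root vertex r, pairwise disjoint complete graphs K¹_i of size i for each i ∈ ℕ (their union forming a set A₁), and for each vertex x ∈ A₁ and each j ∈ ℕ a complete graph K²_{x,j} of size j (all pairwise disjoint), with additional edges joining r to every vertex of A₁ and joining each x ∈ A₁ to every vertex of K²_{x,j} for every j. Then there is no graph homomorphism from G² to G¹. -/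
/-- The graph `G¹` on `ℕ × {0,1}` (`false = 0`, `true = 1`): two vertices in
the same part are adjacent iff they are distinct and have the same integer
square root; `(n, 0)` and `(m, 1)` are adjacent iff `n < m`. -/
def G1 : SimpleGraph (ℕ × Bool) :=
  SimpleGraph.fromRel (fun a b =>
    (a.2 = b.2 ∧ Nat.sqrt a.1 = Nat.sqrt b.1) ∨
    (a.2 = false ∧ b.2 = true ∧ a.1 < b.1))

/-- Vertices of the cliques `K¹_i`, `i ∈ ℕ`: the clique `K¹_i` has `i`
vertices `⟨i, 0⟩, …, ⟨i, i−1⟩`. -/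
def A1 : Type := Σ i : ℕ, Fin i

/-- Vertices of `G²`: the root `r` (= `none`), the cliques `K¹_i` (`Sum.inl`),
and for each `x ∈ A₁`, `j ∈ ℕ` the clique `K²_{x,j}` with `j` vertices
(`Sum.inr (x, ⟨j, b⟩)`). -/
def V2 : Type := Option (A1 ⊕ (A1 × Σ j : ℕ, Fin j))

/-- The graph `G²`: a root `r` joined to all of `A₁`; `A₁` is a disjoint union
of cliques `K¹_i` of size `i`; each `x ∈ A₁` is joined to all vertices of the
cliques `K²_{x,j}` of size `j`, `j ∈ ℕ`. -/
def G2 : SimpleGraph V2 :=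
  SimpleGraph.fromRel (fun a b =>
    (a = none ∧ ∃ x, b = some (Sum.inl x)) ∨
    (∃ (i : ℕ) (u v : Fin i), a = some (Sum.inl ⟨i, u⟩) ∧ b = some (Sum.inl ⟨i, v⟩)) ∨
    (∃ (x : A1) (j : ℕ) (u v : Fin j),
      a = some (Sum.inr (x, ⟨j, u⟩)) ∧ b = some (Sum.inr (x, ⟨j, v⟩))) ∨
    (∃ (x : A1) (s : Σ j : ℕ, Fin j),
      a = some (Sum.inl x) ∧ b = some (Sum.inr (x, s))))

lemma sqrt_block_bound {p n : ℕ} (h : Nat.sqrt p = Nat.sqrt n) :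
    p < (n + 1) * (n + 1) := by
  have h1 := Nat.lt_succ_sqrt p
  have h2 := Nat.sqrt_le_self n
  rw [h] at h1
  nlinarith

lemma g1_true_bound {n p : ℕ} {b : Bool} (h : G1.Adj (n, true) (p, b)) :
    p < (n + 1) * (n + 1) := by
  rw [G1, SimpleGraph.fromRel_adj] at h
  obtain ⟨hne, h | h⟩ := h
  · rcases h with ⟨_, hs⟩ | ⟨h, _⟩
    · exact sqrt_block_bound hs.symm
    · simp at h
  · rcases h with ⟨_, hs⟩ | ⟨_, _, hlt⟩
    · exact sqrt_block_bound hs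
    · exact lt_of_lt_of_le hlt (by nlinarith)

lemma g1_false_false {n p : ℕ} (h : G1.Adj (n, false) (p, false)) :
    Nat.sqrt n = Nat.sqrt p ∧ n ≠ p := by
  rw [G1, SimpleGraph.fromRel_adj] at h
  obtain ⟨hne, h | h⟩ := h
  · rcases h with ⟨_, hs⟩ | ⟨_, hb, _⟩
    · exact ⟨hs, fun he => hne (by simp [he])⟩
    · simp at hb
  · rcases h with ⟨_, hs⟩ | ⟨_, hb, _⟩
    · exact ⟨hs.symm, fun he => hne (by simp [he])⟩
    · simp at hb

lemma g2_root_adj (x : A1) : G2.Adj none (some (Sum.inl x)) := by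
  rw [G2]; refine (SimpleGraph.fromRel_adj _ _ _).mpr ?_
  exact ⟨fun h => (by cases h), Or.inl (Or.inl ⟨rfl, x, rfl⟩)⟩

lemma g2_k1_adj {i : ℕ} {u v : Fin i} (h : u ≠ v) :
    G2.Adj (some (Sum.inl ⟨i, u⟩)) (some (Sum.inl ⟨i, v⟩)) := by
  rw [G2]; refine (SimpleGraph.fromRel_adj _ _ _).mpr ?_
  refine ⟨fun he => h ?_, Or.inl (Or.inr (Or.inl ⟨i, u, v, rfl, rfl⟩))⟩
  have h1 : Sum.inl (⟨i, u⟩ : A1) = Sum.inl ⟨i, v⟩ := Option.some_injective _ he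
  have h2 : (⟨i, u⟩ : Σ k : ℕ, Fin k) = ⟨i, v⟩ := Sum.inl_injective h1
  exact eq_of_heq (Sigma.mk.inj_iff.mp h2).2

lemma g2_join_adj (x : A1) (s : Σ j : ℕ, Fin j) :
    G2.Adj (some (Sum.inl x)) (some (Sum.inr (x, s))) := by
  rw [G2]; refine (SimpleGraph.fromRel_adj _ _ _).mpr ?_
  refine ⟨fun he => ?_, Or.inl (Or.inr (Or.inr (Or.inr ⟨x, s, rfl, rfl⟩)))⟩
  cases he

lemma g2_k2_adj (x : A1) {j : ℕ} {u v : Fin j} (h : u ≠ v) :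
    G2.Adj (some (Sum.inr (x, ⟨j, u⟩))) (some (Sum.inr (x, ⟨j, v⟩))) := by
  rw [G2]; refine (SimpleGraph.fromRel_adj _ _ _).mpr ?_
  refine ⟨fun he => h ?_, Or.inl (Or.inr (Or.inr (Or.inl ⟨x, j, u, v, rfl, rfl⟩)))⟩
  have h1 : Sum.inr (α := A1) (x, (⟨j, u⟩ : Σ k : ℕ, Fin k)) = Sum.inr (x, ⟨j, v⟩) :=
    Option.some_injective _ he
  have h2 : ((⟨j, u⟩ : Σ k : ℕ, Fin k)) = ⟨j, v⟩ :=
    congrArg Prod.snd (Sum.inr_injective h1)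
  exact eq_of_heq (Sigma.mk.inj_iff.mp h2).2

lemma snd_false (f : G2 →g G1) (v : V2)
    (H : ∀ j : ℕ, ∃ g : Fin j → V2, (∀ u, G2.Adj v (g u)) ∧
      (∀ u w : Fin j, u ≠ w → G2.Adj (g u) (g w))) :
    (f v).2 = false := by
  by_contra hb
  have hb' : (f v).2 = true := by cases h : (f v).2 <;> simp_all
  set m := (f v).1 with hm
  have hfv : f v = (m, true) := by rw [hm, ← hb']
  obtain ⟨g, hadj, hcl⟩ := H (2 * ((m + 1) * (m + 1)) + 1)
  have hinj : Function.Injective (fun u => f (g u)) := by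
    intro u w huw
    by_contra hne
    exact (f.map_adj (hcl u w hne)).ne huw
  have hmem : ∀ u, f (g u) ∈
      (Finset.range ((m + 1) * (m + 1))) ×ˢ (Finset.univ : Finset Bool) := by
    intro u
    have h1 := f.map_adj (hadj u)
    rw [hfv] at h1
    have h2 : G1.Adj (m, true) ((f (g u)).1, (f (g u)).2) := by
      rwa [Prod.mk.eta]
    have h3 := g1_true_bound h2
    simp [Finset.mem_product, Finset.mem_range, h3]
  have hcard := Finset.card_le_card_of_injOn (s := Finset.univ) (fun u => f (g u))
    (fun u _ => hmem u) hinj.injOn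
  simp [Finset.card_univ] at hcard
  omega

/-- There is no graph homomorphism from `G²` to `G¹`. -/
theorem no_hom_G2_G1 : ¬ Nonempty (G2 →g G1) := by
  rintro ⟨f⟩
  have hroot : (f none).2 = false :=
    snd_false f none (fun j =>
      ⟨fun u => some (Sum.inl ⟨j, u⟩),
       fun u => g2_root_adj _,
       fun u w h => g2_k1_adj h⟩)
  have hA : ∀ x : A1, (f (some (Sum.inl x))).2 = false := fun x =>
    snd_false f _ (fun j =>
      ⟨fun u => some (Sum.inr (x, ⟨j, u⟩)),
       fun u => g2_join_adj x ⟨j, u⟩,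
       fun u w h => g2_k2_adj x h⟩)
  set n := (f none).1 with hn
  have hfn : f none = (n, false) := by rw [hn, ← hroot]
  have key : ∀ x : A1, (f (some (Sum.inl x))).1 < (n + 1) * (n + 1) := by
    intro x
    have h1 := f.map_adj (g2_root_adj x)
    rw [hfn] at h1
    have h2 : G1.Adj (n, false) ((f (some (Sum.inl x))).1, false) := by
      have he : ((f (some (Sum.inl x))).1, false) = f (some (Sum.inl x)) := by
        conv_lhs => rw [← hA x]
      rwa [he]
    exact sqrt_block_bound (g1_false_false h2).1.symm
  set i := (n + 1) * (n + 1) + 1 with hi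
  have hinj : Function.Injective (fun u : Fin i => (f (some (Sum.inl ⟨i, u⟩))).1) := by
    intro u w huw
    by_contra hne
    have hadj := f.map_adj (g2_k1_adj hne)
    exact hadj.ne (Prod.ext huw (by exact (hA ⟨i, u⟩).trans (hA ⟨i, w⟩).symm))
  have hmem : ∀ u : Fin i, (f (some (Sum.inl ⟨i, u⟩))).1 ∈
      Finset.range ((n + 1) * (n + 1)) := fun u => Finset.mem_range.mpr (key _)
  have hcard := Finset.card_le_card_of_injOn (s := Finset.univ)
    (fun u : Fin i => (f (some (Sum.inl ⟨i, u⟩))).1)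
    (fun u _ => hmem u) hinj.injOn
  simp [Finset.card_univ] at hcard
  omega
end

section
/- Let H be a simple graph on vertex set ℕ, and for n ∈ ℕ let H_n denote the subgraph of H induced on {0,…,n−1}. For a graph G admitting no homomorphism H → G, consider the set T^G_H of all homomorphisms H_n → G (n = 0, 1, 2, …) ordered by extension of functions. Then: (a) the converse extension relation (g ≺ f iff g strictly extends f) is well-founded, so the ordinal rank rk_H(G) of the empty function is well-defined; (b) if G₁ and G₂ are graphs with no homomorphism H → G₁ and no homomorphism H → G₂, and there is a homomorphism G₁ → G₂, then rk_H(G₁) ≤ rk_H(G₂). -/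
/-- The `H`-valued tree `T^G_H`: homomorphisms from the induced subgraphs
`H_n` of `H` on `{0,…,n−1}` into `G`, encoded as lists `l` of vertices of `G`
of length `n` such that adjacency in `H` below `n` is sent to adjacency
in `G`. -/
def homTree {V : Type*} (H : SimpleGraph ℕ) (G : SimpleGraph V) : Type _ :=
  {l : List V // ∀ (i j : ℕ) (hi : i < l.length) (hj : j < l.length),
    H.Adj i j → G.Adj (l.get ⟨i, hi⟩) (l.get ⟨j, hj⟩)}

/-- `homExt H G g f` means that `g` strictly extends `f` in `T^G_H`. -/
def homExt {V : Type*} (H : SimpleGraph ℕ) (G : SimpleGraph V) :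
    homTree H G → homTree H G → Prop :=
  fun g f => f.1 <+: g.1 ∧ f.1 ≠ g.1

/-- The empty function as an element of `T^G_H`. -/
def homTree.nil {V : Type*} (H : SimpleGraph ℕ) (G : SimpleGraph V) :
    homTree H G :=
  ⟨[], by intro i j hi hj; simp at hi⟩

/-!
A descending chain in `T^G_H` is a sequence of longer and longer compatible lists, whose union is a
homomorphism `H → G`; so without such a homomorphism the tree is well-founded. A homomorphism
`ψ : G₁ → G₂` acts on `T^{G₁}_H → T^{G₂}_H` by composition, preserving strict extension and the
empty function, and ranks can only grow along such a map.
-/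

universe u

theorem Acc.rank_le_rank_of_relHom {α β : Type u} {r : α → α → Prop} {s : β → β → Prop}
    (f : r →r s) {a : α} (ha : Acc r a) (hb : Acc s (f a)) : ha.rank ≤ hb.rank := by
  induction ha with
  | intro a _ ih =>
    rw [Acc.rank_eq]
    refine Ordinal.iSup_le fun ⟨b, hba⟩ => ?_
    have hfba : s (f b) (f a) := f.map_rel hba
    exact Order.succ_le_of_lt
      ((ih b hba (hb.inv hfba)).trans_lt (hb.rank_lt_of_rel hfba))

theorem List.exists_getElem_eq_of_prefix_chain {α : Type*} {c : ℕ → List α}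
    (hc : ∀ n, c n <+: c (n + 1)) (hlen : ∀ n, n ≤ (c n).length) :
    ∃ φ : ℕ → α, ∀ n i (hi : i < (c n).length), (c n)[i] = φ i := by
  have hmono : ∀ ⦃m n⦄, m ≤ n → c m <+: c n := fun m _ =>
    Nat.rel_of_forall_rel_succ_of_le_of_le (· <+: ·) (fun n _ => hc n) m.zero_le
  have hi : ∀ i, i < (c (i + 1)).length := fun i => (hlen (i + 1)).trans_lt' i.lt_succ_self
  refine ⟨fun i => (c (i + 1))[i]'(hi i), fun n i hin => ?_⟩
  calc (c n)[i] = (c (max n (i + 1)))[i]'(hin.trans_le (hmono (le_max_left _ _)).length_le) :=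
        (hmono (le_max_left _ _)).getElem hin
    _ = (c (i + 1))[i]'(hi i) := ((hmono (le_max_right _ _)).getElem (hi i)).symm

namespace homTree

variable {V V' : Type*} {H : SimpleGraph ℕ} {G : SimpleGraph V} {G' : SimpleGraph V'}

theorem length_lt_of_homExt {f g : homTree H G} (h : homExt H G g f) :
    f.1.length < g.1.length :=
  h.1.length_le.lt_of_ne fun hlen => h.2 (h.1.eq_of_length hlen)

theorem nonempty_hom_of_descending_chain (e : ℕ → homTree H G)
    (he : ∀ n, homExt H G (e (n + 1)) (e n)) : Nonempty (H →g G) := by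
  have hlen : ∀ n, n ≤ (e n).1.length := by
    intro n
    induction n with
    | zero => exact Nat.zero_le _
    | succ n ih => exact ih.trans_lt (length_lt_of_homExt (he n))
  obtain ⟨φ, hφ⟩ := List.exists_getElem_eq_of_prefix_chain (fun n => (he n).1) hlen
  refine ⟨⟨φ, fun {i j} hij => ?_⟩⟩
  have hi : i < (e (max i j + 1)).1.length := (hlen _).trans_lt' (by omega)
  have hj : j < (e (max i j + 1)).1.length := (hlen _).trans_lt' (by omega)
  simpa only [List.get_eq_getElem, hφ] using (e (max i j + 1)).2 i j hi hj hij

def map (ψ : G →g G') (f : homTree H G) : homTree H G' :=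
  ⟨f.1.map ψ, fun i j hi hj hij => by
    simpa only [List.get_eq_getElem, List.getElem_map] using
      ψ.map_adj (f.2 i j (by simpa using hi) (by simpa using hj) hij)⟩

def mapRelHom (ψ : G →g G') : homExt H G →r homExt H G' where
  toFun := map ψ
  map_rel' h := ⟨h.1.map ψ, fun heq =>
    h.2 (h.1.eq_of_length (by simpa [map] using congrArg List.length heq))⟩

end homTree

theorem homExt_wellFounded {V : Type*} {H : SimpleGraph ℕ} {G : SimpleGraph V}
    (h : ¬ Nonempty (H →g G)) : WellFounded (homExt H G) :=
  wellFounded_iff_isEmpty_descending_chain.2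
    ⟨fun ⟨e, he⟩ => h (homTree.nonempty_hom_of_descending_chain e he)⟩

theorem homTree_rank_wellDefined_and_monotone_general {V₁ V₂ : Type u}
    (H : SimpleGraph ℕ) (G₁ : SimpleGraph V₁) (G₂ : SimpleGraph V₂) :
    (∀ (W : Type u) (G : SimpleGraph W), ¬ Nonempty (H →g G) →
      WellFounded (homExt H G)) ∧
    (∀ (wf₁ : WellFounded (homExt H G₁)) (wf₂ : WellFounded (homExt H G₂)),
      Nonempty (G₁ →g G₂) →
        (wf₁.apply (homTree.nil H G₁)).rank ≤
          (wf₂.apply (homTree.nil H G₂)).rank) :=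
  ⟨fun _ _ => homExt_wellFounded, fun wf₁ wf₂ ⟨ψ⟩ =>
    Acc.rank_le_rank_of_relHom (homTree.mapRelHom ψ) (wf₁.apply _) (wf₂.apply _)⟩

/-- (a) If there is no homomorphism `H → G`, then "strictly extends" on
`T^G_H` is well-founded, so the rank `rk_H(G)` of the empty function is
well-defined; (b) if `H ↛ G₁`, `H ↛ G₂` and `G₁ → G₂` then
`rk_H(G₁) ≤ rk_H(G₂)`. -/
theorem homTree_rank_wellDefined_and_monotone {V₁ V₂ : Type u}
    (H : SimpleGraph ℕ) (G₁ : SimpleGraph V₁) (G₂ : SimpleGraph V₂)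
    (h₁ : ¬ Nonempty (H →g G₁)) (h₂ : ¬ Nonempty (H →g G₂)) :
    (∀ (W : Type u) (G : SimpleGraph W), ¬ Nonempty (H →g G) →
      WellFounded (homExt H G)) ∧
    (∀ (wf₁ : WellFounded (homExt H G₁)) (wf₂ : WellFounded (homExt H G₂)),
      Nonempty (G₁ →g G₂) →
        (wf₁.apply (homTree.nil H G₁)).rank ≤
          (wf₂.apply (homTree.nil H G₂)).rank) :=
  homTree_rank_wellDefined_and_monotone_general H G₁ G₂
end

section
/- Let G be a countable simple graph on vertex set ℕ and H a countable simple graph. Then there is a homomorphism G → H if and only if for every countable ordinal α there is a homomorphism G^{<α>} → H. -/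
/-- The graph `G^{<α>}` for a graph `G` on `ℕ`: vertices are finite strictly
decreasing sequences of ordinals `< α`; `ν` and `μ` are adjacent iff one is a
proper initial segment of the other and their lengths are adjacent in `G`. -/
def GTree (G : SimpleGraph ℕ) (α : Ordinal) : SimpleGraph (DecSeq α) :=
  SimpleGraph.fromRel (fun ν μ => ν.1 <+: μ.1 ∧ G.Adj ν.1.length μ.1.length)

namespace HomGTreeAux

open Cardinal Order List

variable {W : Type} (G : SimpleGraph ℕ) (H : SimpleGraph W)

/-- Finite partial homomorphisms from an initial segment of `ℕ` to `H`,
coded as lists. -/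
def PHom : Type :=
  {l : List W // ∀ i j (hi : i < l.length) (hj : j < l.length),
    G.Adj i j → H.Adj l[i] l[j]}

instance [Countable W] : Countable (PHom G H) := by
  unfold PHom; infer_instance

/-- Proper extension of partial homomorphisms. -/
def pext (p q : PHom G H) : Prop := q.1 <+: p.1 ∧ q.1 ≠ p.1

variable {G H}

lemma pext_length {p q : PHom G H} (h : pext G H p q) : q.1.length < p.1.length :=
  lt_of_le_of_ne h.1.length_le (fun he => h.2 (h.1.eq_of_length he))

/-- An infinite strictly increasing chain of partial homomorphisms yields a
homomorphism `G →g H`. -/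
lemma hom_of_descending (f : ℕ → PHom G H) (hf : ∀ n, pext G H (f (n + 1)) (f n)) :
    Nonempty (G →g H) := by
  have hpre : ∀ m n, m ≤ n → (f m).1 <+: (f n).1 := by
    intro m n h
    induction h with
    | refl => exact List.prefix_refl _
    | step h ih => exact ih.trans (hf _).1
  have hlen : ∀ n, n ≤ (f n).1.length := by
    intro n
    induction n with
    | zero => exact Nat.zero_le _
    | succ n ih => exact Nat.succ_le_of_lt (lt_of_le_of_lt ih (pext_length (hf n)))
  have hg : ∀ i, i < (f (i + 1)).1.length := fun i =>
    lt_of_lt_of_le (Nat.lt_succ_self i) (hlen (i + 1))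
  refine ⟨⟨fun i => (f (i + 1)).1[i]'(hg i), ?_⟩⟩
  intro i j hadj
  set N := max i j + 1 with hN
  have hiN : i + 1 ≤ N := Nat.succ_le_succ (le_max_left _ _)
  have hjN : j + 1 ≤ N := Nat.succ_le_succ (le_max_right _ _)
  have hi' : i < (f N).1.length :=
    lt_of_lt_of_le (hg i) ((hpre _ _ hiN).length_le)
  have hj' : j < (f N).1.length :=
    lt_of_lt_of_le (hg j) ((hpre _ _ hjN).length_le)
  have ei : (f (i + 1)).1[i]'(hg i) = (f N).1[i]'hi' :=
    (hpre _ _ hiN).getElem (hg i)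
  have ej : (f (j + 1)).1[j]'(hg j) = (f N).1[j]'hj' :=
    (hpre _ _ hjN).getElem (hg j)
  simp only [ei, ej]
  exact (f N).2 i j hi' hj' hadj

variable {α : Ordinal}

/-- Initial segment of a decreasing sequence. -/
def dtake (s : DecSeq α) (k : ℕ) : DecSeq α :=
  ⟨s.1.take k, s.2.1.take k, fun x hx => s.2.2 x (List.mem_of_mem_take hx)⟩

lemma dtake_len (s : DecSeq α) {k : ℕ} (h : k ≤ s.1.length) :
    (dtake s k).1.length = k := by
  simp [dtake]; omega

lemma adj_dtake (s : DecSeq α) {i j : ℕ} (hij : i < j) (hj : j ≤ s.1.length)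
    (ha : G.Adj i j) : (GTree G α).Adj (dtake s i) (dtake s j) := by
  have hi : i ≤ s.1.length := le_of_lt (lt_of_lt_of_le hij hj)
  rw [GTree, SimpleGraph.fromRel_adj]
  refine ⟨?_, Or.inl ⟨List.take_prefix_take_left (le_of_lt hij), ?_⟩⟩
  · intro he
    have := congrArg (fun t : DecSeq α => t.1.length) he
    simp only [dtake_len s hi, dtake_len s hj] at this
    omega
  · rw [dtake_len s hi, dtake_len s hj]; exact ha

/-- The trace of a coloring along the initial segments of a decreasing
sequence, as a list. -/
def traceL (c : GTree G α →g H) (s : DecSeq α) : List W :=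
  (List.range (s.1.length + 1)).map fun k => c (dtake s k)

lemma traceL_length (c : GTree G α →g H) (s : DecSeq α) :
    (traceL c s).length = s.1.length + 1 := by
  simp [traceL]

/-- The trace is a partial homomorphism. -/
def traceF (c : GTree G α →g H) (s : DecSeq α) : PHom G H := by
  refine ⟨traceL c s, ?_⟩
  intro i j hi hj hadj
  simp only [traceL, List.getElem_map, List.getElem_range]
  rw [traceL_length] at hi hj
  rcases lt_or_gt_of_ne hadj.ne with h | h
  · exact c.map_adj (adj_dtake s h (Nat.lt_succ_iff.mp hj) hadj)
  · exact (c.map_adj (adj_dtake s h (Nat.lt_succ_iff.mp hi) hadj.symm)).symm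

/-- Appending a small ordinal to a decreasing sequence. -/
def dcons (s : DecSeq α) (β : Ordinal) (hβα : β < α) (hβ : ∀ x ∈ s.1, β < x) :
    DecSeq α := by
  refine ⟨s.1 ++ [β], ?_, ?_⟩
  · unfold List.Chain'; rw [List.isChain_append]
    refine ⟨s.2.1, List.isChain_singleton _, ?_⟩
    intro x hx y hy
    simp only [List.head?_cons, Option.mem_def, Option.some.injEq] at hy
    subst hy
    exact hβ x (List.mem_of_mem_getLast? hx)
  · intro x hx
    rcases List.mem_append.1 hx with h | h
    · exact s.2.2 x h
    · simp only [List.mem_singleton] at h; subst h; exact hβα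

lemma dcons_len (s : DecSeq α) (β : Ordinal) (hβα : β < α) (hβ : ∀ x ∈ s.1, β < x) :
    (dcons s β hβα hβ).1.length = s.1.length + 1 := by
  simp [dcons]

lemma trace_dcons (c : GTree G α →g H) (s : DecSeq α) (β : Ordinal)
    (hβα : β < α) (hβ : ∀ x ∈ s.1, β < x) :
    traceL c (dcons s β hβα hβ) = traceL c s ++ [c (dcons s β hβα hβ)] := by
  have hmap : (List.range (s.1.length + 1)).map (fun k => c (dtake (dcons s β hβα hβ) k))
      = (List.range (s.1.length + 1)).map (fun k => c (dtake s k)) := by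
    apply List.map_congr_left
    intro k hk
    have hk' : k ≤ s.1.length := Nat.lt_succ_iff.mp (List.mem_range.1 hk)
    congr 1
    apply Subtype.ext
    show (s.1 ++ [β]).take k = s.1.take k
    exact List.take_append_of_le_length hk'
  have hlast : dtake (dcons s β hβα hβ) (s.1.length + 1) = dcons s β hβα hβ := by
    apply Subtype.ext
    show (s.1 ++ [β]).take (s.1.length + 1) = s.1 ++ [β]
    apply List.take_of_length_le
    simp
  unfold traceL
  rw [dcons_len, List.range_succ, List.map_append, hmap]
  simp only [List.map_cons, List.map_nil, hlast]

lemma pext_trace (c : GTree G α →g H) (s : DecSeq α) (β : Ordinal)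
    (hβα : β < α) (hβ : ∀ x ∈ s.1, β < x) :
    pext G H (traceF c (dcons s β hβα hβ)) (traceF c s) := by
  constructor
  · show traceL c s <+: traceL c (dcons s β hβα hβ)
    rw [trace_dcons c s β hβα hβ]
    exact List.prefix_append _ _
  · intro he
    have h1 : traceL c s = traceL c (dcons s β hβα hβ) := he
    have h2 := congrArg List.length h1
    rw [traceL_length, traceL_length, dcons_len] at h2
    omega

end HomGTreeAux

open HomGTreeAux Cardinal Order in
/-- For countable `G` (on `ℕ`) and countable `H`: `G → H` iff
`G^{<α>} → H` for every countable ordinal `α`. -/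
theorem hom_iff_forall_GTree_hom (G : SimpleGraph ℕ)
    {W : Type} [Countable W] (H : SimpleGraph W) :
    Nonempty (G →g H) ↔
      ∀ α : Ordinal, α.card ≤ Cardinal.aleph0 → Nonempty (GTree G α →g H) := by
  constructor
  · rintro ⟨f⟩ α _
    refine ⟨⟨fun ν => f ν.1.length, ?_⟩⟩
    intro ν μ hadj
    rw [GTree, SimpleGraph.fromRel_adj] at hadj
    rcases hadj with ⟨_, h | h⟩
    · exact f.map_adj h.2
    · exact (f.map_adj h.2).symm
  · intro h
    by_cases hwf : WellFounded (pext G H)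
    · haveI : IsWellFounded (PHom G H) (pext G H) := ⟨hwf⟩
      set rk : PHom G H → Ordinal.{0} := IsWellFounded.rank (pext G H) with hrkdef
      have haleph : (ℵ₀ : Cardinal) ≤ Cardinal.aleph 1 := le_of_lt aleph0_lt_aleph_one
      have hrk : ∀ p, rk p < (Cardinal.aleph 1).ord := by
        intro p
        induction p using hwf.induction with
        | _ p IH =>
          rw [hrkdef, IsWellFounded.rank_eq]
          rw [Cardinal.ord_aleph]; apply Ordinal.iSup_lt_omega_one; simp only [← Cardinal.ord_aleph]
          rintro ⟨q, hq⟩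
          exact (Cardinal.isSuccLimit_ord haleph).succ_lt (IH q hq)
      set α₀ : Ordinal.{0} := ⨆ p : PHom G H, Order.succ (rk p) with hα₀def
      have hα₀1 : α₀ < (Cardinal.aleph 1).ord := by
        rw [Cardinal.ord_aleph]; apply Ordinal.iSup_lt_omega_one; simp only [← Cardinal.ord_aleph]
        intro p
        exact (Cardinal.isSuccLimit_ord haleph).succ_lt (hrk p)
      have hα₀card : α₀.card ≤ ℵ₀ := by
        have := Cardinal.lt_ord.1 hα₀1
        rwa [← Cardinal.succ_aleph0, Order.lt_succ_iff] at this
      set α := Ordinal.lift α₀ with hαdef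
      have hαcard : α.card ≤ ℵ₀ := by
        rw [hαdef, ← Ordinal.lift_card, ← Cardinal.lift_aleph0]
        exact Cardinal.lift_le.2 hα₀card
      obtain ⟨c⟩ := h α hαcard
      set rk' : PHom G H → Ordinal := fun p => Ordinal.lift (rk p) with hrk'def
      have hsucc : ∀ p, Order.succ (rk' p) ≤ α := by
        intro p
        rw [hrk'def, ← Ordinal.lift_succ, hαdef]
        exact Ordinal.lift_le.2 (Ordinal.le_iSup (fun p => Order.succ (rk p)) p)
      have key : ∀ γ : Ordinal, γ ≤ α → ∀ s : DecSeq α,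
          (∀ x ∈ s.1, γ ≤ x) → γ ≤ rk' (traceF c s) := by
        intro γ
        induction γ using Ordinal.induction with
        | _ γ IH =>
          intro hγα s hs
          by_contra hlt
          push_neg at hlt
          set β : Ordinal := rk' (traceF c s) with hβdef
          have hβγ : β < γ := hlt
          have hβα : β < α := lt_of_lt_of_le hβγ hγα
          have hβs : ∀ x ∈ s.1, β < x := fun x hx => lt_of_lt_of_le hβγ (hs x hx)
          have h1 : β ≤ rk' (traceF c (dcons s β hβα hβs)) := by
            apply IH β hβγ (le_of_lt hβα)
            intro x hx
            rcases List.mem_append.1 hx with hx' | hx'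
            · exact le_of_lt (hβs x hx')
            · simp only [List.mem_singleton] at hx'; subst hx'; exact le_rfl
          have h2 : rk' (traceF c (dcons s β hβα hβs)) < rk' (traceF c s) :=
            Ordinal.lift_lt.2 (IsWellFounded.rank_lt_of_rel (pext_trace c s β hβα hβs))
          rw [← hβdef] at h2
          exact absurd (lt_of_le_of_lt h1 h2) (lt_irrefl β)
      set sempty : DecSeq α := ⟨[], List.isChain_nil, by simp⟩ with hsdef
      have hempty : ∀ x ∈ sempty.1, α ≤ x := by
        intro x hx
        exact absurd hx (List.not_mem_nil)
      have hfinal : α ≤ rk' (traceF c sempty) := key α le_rfl sempty hempty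
      exact absurd (lt_of_le_of_lt hfinal
          (lt_of_lt_of_le (Order.lt_succ _) (hsucc _))) (lt_irrefl α)
    · haveI : IsIrrefl (PHom G H) (pext G H) := ⟨fun p hp => hp.2 rfl⟩
      haveI : IsTrans (PHom G H) (pext G H) := by
        refine ⟨fun p q r hpq hqr => ⟨hqr.1.trans hpq.1, fun he => ?_⟩⟩
        exact absurd (congrArg List.length he) (by
          have h1 := pext_length hpq
          have h2 := pext_length hqr
          omega)
      haveI : IsStrictOrder (PHom G H) (pext G H) := ⟨⟩
      rw [RelEmbedding.wellFounded_iff_isEmpty, not_isEmpty_iff] at hwf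
      obtain ⟨f⟩ := hwf
      exact hom_of_descending f (fun n => f.map_rel_iff.2 (Nat.lt_succ_self n))
end

section
/- The binary relation R on ℕ given by R(n, m) iff m = n + 1 or (n, m) = (0, 3) is rigid: the only map f : ℕ → ℕ satisfying R(a, b) → R(f(a), f(b)) for all a, b is the identity. -/
/-!
Away from `0` the map is a translation: an edge `(k, k+1)` can only be sent onto the arc `(0, 3)`
if `f k = 0`. A translation by a nonzero amount would stretch the arc `(0, 3)` to length `3`, so
`f 0 = 0`. Then `f 1 ∈ {1, 3}`, and `f 1 = 3` would give `f 3 = 5`, which the arc forbids; so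
`f 1 = 1`, and translating from `1` gives the identity.
-/

def pathArc (a b : ℕ) : Prop := b = a + 1 ∨ (a = 0 ∧ b = 3)

section

variable {f : ℕ → ℕ}

lemma pathArc_map_succ_of_ne_zero (hf : ∀ a b, pathArc a b → pathArc (f a) (f b)) {k : ℕ}
    (hk : f k ≠ 0) : f (k + 1) = f k + 1 := by
  rcases hf k (k + 1) (Or.inl rfl) with h | ⟨h, -⟩
  · exact h
  · exact absurd h hk

lemma pathArc_map_add_of_ne_zero (hf : ∀ a b, pathArc a b → pathArc (f a) (f b)) {m : ℕ}
    (hm : f m ≠ 0) (j : ℕ) : f (m + j) = f m + j := by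
  induction j with
  | zero => rfl
  | succ j ih => rw [← add_assoc, pathArc_map_succ_of_ne_zero hf (by omega), ih, add_assoc]

lemma pathArc_map_zero (hf : ∀ a b, pathArc a b → pathArc (f a) (f b)) : f 0 = 0 := by
  by_contra h
  have h3 : f 3 = f 0 + 3 := pathArc_map_add_of_ne_zero hf h 3
  rcases hf 0 3 (Or.inr ⟨rfl, rfl⟩) with h' | ⟨h', -⟩ <;> omega

lemma pathArc_map_one (hf : ∀ a b, pathArc a b → pathArc (f a) (f b)) : f 1 = 1 := by
  have h0 := pathArc_map_zero hf
  rcases hf 0 1 (Or.inl rfl) with h1 | ⟨-, h1⟩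
  · omega
  · have h3 : f 3 = f 1 + 2 := pathArc_map_add_of_ne_zero hf (m := 1) (by omega) 2
    rcases hf 0 3 (Or.inr ⟨rfl, rfl⟩) with h | ⟨-, h⟩ <;> omega

end

/-- The relation on `ℕ` consisting of all pairs `(n, n+1)` together with the
extra pair `(0, 3)` is rigid: its only endomorphism is the identity. -/
theorem rigid_path_with_arc (f : ℕ → ℕ)
    (hf : ∀ a b : ℕ, (b = a + 1 ∨ (a = 0 ∧ b = 3)) →
      (f b = f a + 1 ∨ (f a = 0 ∧ f b = 3))) :
    ∀ n, f n = n := by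
  have h1 : f 1 = 1 := pathArc_map_one hf
  rintro (_ | n)
  · exact pathArc_map_zero hf
  · rw [add_comm, pathArc_map_add_of_ne_zero hf (m := 1) (by omega) n, h1]
end
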